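/- arXiv:1206.4077 — 5 statements merged into one kernel-verified Lean document; each statement's English description precedes it below -/
import Mathlib

section
/- Suppose that R is a regular local ring of dimension d > 0 and {I_n} is a graded family of m_R-primary ideals in R. Then the limit lim_{n→∞} ℓ_R(R/I_n)/n^d exists (as a real number). -/
open Filter Topology IsLocalRing

/-- The length of an `R`-module `M` (the supremum of lengths of chains of submodules),
as a natural number (junk value if infinite). -/
noncomputable def moduleLength (R M : Type*) [CommRing R] [AddCommGroup M] [Module R M] : ℕ :=
  (WithBot.unbotD 0 (Order.krullDim (Submodule R M))).toNat
/-- A Noetherian local ring is regular if its maximal ideal can be generated by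
`dim` elements. -/
def IsRegularLocalRing' (A : Type*) [CommRing A] [IsLocalRing A] : Prop :=
  IsNoetherianRing A ∧ ∃ s : Finset A, Ideal.span (s : Set A) = IsLocalRing.maximalIdeal A ∧
    (s.card : WithBot ℕ∞) = ringKrullDim A

namespace AuxCount

variable {d : ℕ}

/-- total degree -/
def deg (u : Fin d → ℕ) : ℕ := ∑ i, u i

/-- lexicographic strict order -/
def lexlt (u v : Fin d → ℕ) : Prop := ∃ i, (∀ j, j < i → u j = v j) ∧ u i < v i

/-- degree-lexicographic strict order -/
def mlt (u v : Fin d → ℕ) : Prop := deg u < deg v ∨ (deg u = deg v ∧ lexlt u v)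

/-- degree-lexicographic order (reflexive) -/
def mle (u v : Fin d → ℕ) : Prop := mlt u v ∨ u = v

lemma deg_add (u v : Fin d → ℕ) : deg (u + v) = deg u + deg v := by
  simp [deg, Finset.sum_add_distrib]

lemma deg_eq_zero_iff {u : Fin d → ℕ} : deg u = 0 ↔ u = 0 := by
  constructor
  · intro h; funext i
    have := Finset.sum_eq_zero_iff.1 h i (Finset.mem_univ i)
    simpa using this
  · rintro rfl; simp [deg]

lemma lexlt_irrefl (u : Fin d → ℕ) : ¬ lexlt u u := by
  rintro ⟨i, -, h⟩; exact lt_irrefl _ h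

lemma lexlt_trans {u v w : Fin d → ℕ} (h1 : lexlt u v) (h2 : lexlt v w) : lexlt u w := by
  obtain ⟨i, hi, hlt⟩ := h1
  obtain ⟨i', hi', hlt'⟩ := h2
  rcases lt_trichotomy i i' with h | rfl | h
  · exact ⟨i, fun j hj => (hi j hj).trans (hi' j (hj.trans h)), hlt.trans_le (hi' i h).le⟩
  · exact ⟨i, fun j hj => (hi j hj).trans (hi' j hj), hlt.trans hlt'⟩
  · refine ⟨i', fun j hj => (hi j (hj.trans h)).trans (hi' j hj), ?_⟩
    rw [hi i' h]; exact hlt'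

lemma lexlt_total {u v : Fin d → ℕ} (h : u ≠ v) : lexlt u v ∨ lexlt v u := by
  classical
  have hne : (Finset.univ.filter fun i => u i ≠ v i).Nonempty := by
    by_contra hc
    apply h
    funext i
    by_contra hi
    exact hc ⟨i, Finset.mem_filter.2 ⟨Finset.mem_univ i, hi⟩⟩
  set i := (Finset.univ.filter fun i => u i ≠ v i).min' hne with hidef
  have hi : u i ≠ v i := (Finset.mem_filter.1 ((Finset.univ.filter fun i => u i ≠ v i).min'_mem hne)).2
  have heq : ∀ j, j < i → u j = v j := by
    intro j hj
    by_contra hne2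
    exact absurd ((Finset.univ.filter fun i => u i ≠ v i).min'_le j
      (Finset.mem_filter.2 ⟨Finset.mem_univ j, hne2⟩)) (not_le.2 hj)
  rcases lt_or_gt_of_ne hi with h' | h'
  · exact Or.inl ⟨i, heq, h'⟩
  · exact Or.inr ⟨i, fun j hj => (heq j hj).symm, h'⟩

lemma lexlt_add_right {u v : Fin d → ℕ} (w : Fin d → ℕ) (h : lexlt u v) : lexlt (u + w) (v + w) := by
  obtain ⟨i, hi, hlt⟩ := h
  exact ⟨i, fun j hj => by simp [hi j hj], by simpa using hlt⟩

lemma mlt_irrefl (u : Fin d → ℕ) : ¬ mlt u u := by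
  rintro (h | ⟨-, h⟩)
  · exact lt_irrefl _ h
  · exact lexlt_irrefl u h

lemma mlt_trans {u v w : Fin d → ℕ} (h1 : mlt u v) (h2 : mlt v w) : mlt u w := by
  rcases h1 with h1 | ⟨e1, l1⟩ <;> rcases h2 with h2 | ⟨e2, l2⟩
  · exact Or.inl (h1.trans h2)
  · exact Or.inl (e2 ▸ h1)
  · exact Or.inl (e1 ▸ h2)
  · exact Or.inr ⟨e1.trans e2, lexlt_trans l1 l2⟩

lemma mlt_total {u v : Fin d → ℕ} (h : u ≠ v) : mlt u v ∨ mlt v u := by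
  rcases lt_trichotomy (deg u) (deg v) with h' | h' | h'
  · exact Or.inl (Or.inl h')
  · rcases lexlt_total h with hl | hl
    · exact Or.inl (Or.inr ⟨h', hl⟩)
    · exact Or.inr (Or.inr ⟨h'.symm, hl⟩)
  · exact Or.inr (Or.inl h')

lemma mlt_asymm {u v : Fin d → ℕ} (h : mlt u v) : ¬ mlt v u :=
  fun h' => mlt_irrefl u (mlt_trans h h')

lemma mlt_ne {u v : Fin d → ℕ} (h : mlt u v) : u ≠ v := by
  rintro rfl; exact mlt_irrefl u h

lemma mlt_add_right {u v : Fin d → ℕ} (w : Fin d → ℕ) (h : mlt u v) : mlt (u + w) (v + w) := by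
  rcases h with h | ⟨e, l⟩
  · exact Or.inl (by simp [deg_add]; omega)
  · exact Or.inr ⟨by simp [deg_add, e], lexlt_add_right w l⟩

lemma mlt_add_left {u v : Fin d → ℕ} (w : Fin d → ℕ) (h : mlt u v) : mlt (w + u) (w + v) := by
  rw [add_comm w u, add_comm w v]; exact mlt_add_right w h

lemma mlt_add {u v a b : Fin d → ℕ} (h1 : mlt u v) (h2 : mlt a b) : mlt (u + a) (v + b) :=
  mlt_trans (mlt_add_right a h1) (mlt_add_left v h2)

lemma mlt_of_deg_lt {u v : Fin d → ℕ} (h : deg u < deg v) : mlt u v := Or.inl h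

lemma mle_refl (u : Fin d → ℕ) : mle u u := Or.inr rfl

lemma mle_trans {u v w : Fin d → ℕ} (h1 : mle u v) (h2 : mle v w) : mle u w := by
  rcases h1 with h1 | rfl
  · rcases h2 with h2 | rfl
    · exact Or.inl (mlt_trans h1 h2)
    · exact Or.inl h1
  · exact h2

lemma mle_antisymm {u v : Fin d → ℕ} (h1 : mle u v) (h2 : mle v u) : u = v := by
  rcases h1 with h1 | rfl
  · rcases h2 with h2 | rfl
    · exact absurd h2 (mlt_asymm h1)
    · rfl
  · rfl

lemma mle_total (u v : Fin d → ℕ) : mle u v ∨ mle v u := by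
  rcases eq_or_ne u v with rfl | h
  · exact Or.inl (mle_refl u)
  · rcases mlt_total h with h' | h'
    · exact Or.inl (Or.inl h')
    · exact Or.inr (Or.inl h')

lemma mlt_of_mle_of_ne {u v : Fin d → ℕ} (h : mle u v) (hne : u ≠ v) : mlt u v := by
  rcases h with h | rfl
  · exact h
  · exact absurd rfl hne

lemma mlt_of_mlt_of_mle {u v w : Fin d → ℕ} (h1 : mlt u v) (h2 : mle v w) : mlt u w := by
  rcases h2 with h2 | rfl
  · exact mlt_trans h1 h2
  · exact h1

lemma mle_of_mlt {u v : Fin d → ℕ} (h : mlt u v) : mle u v := Or.inl h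

lemma zero_mle (u : Fin d → ℕ) : mle 0 u := by
  rcases eq_or_ne u 0 with rfl | h
  · exact mle_refl 0
  · refine Or.inl (mlt_of_deg_lt ?_)
    have : deg u ≠ 0 := fun hc => h (deg_eq_zero_iff.1 hc)
    simpa [deg, deg_eq_zero_iff] using Nat.pos_of_ne_zero this


variable {d : ℕ} {R : Type*} [CommRing R]

/-- the monomial `y^u` -/
def mono (y : Fin d → R) (u : Fin d → ℕ) : R := ∏ i, y i ^ u i

lemma mono_add (y : Fin d → R) (u v : Fin d → ℕ) :
    mono y (u + v) = mono y u * mono y v := by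
  simp [mono, pow_add, Finset.prod_mul_distrib]

lemma mono_zero (y : Fin d → R) : mono y 0 = 1 := by simp [mono]

lemma mono_pow (y : Fin d → R) (u : Fin d → ℕ) (k : ℕ) :
    mono y u ^ k = mono y (k • u) := by
  simp [mono, ← Finset.prod_pow, ← pow_mul]
  congr 1; funext i; congr 1; simp [mul_comm]

lemma mono_mem_pow (y : Fin d → R) (u : Fin d → ℕ) :
    mono y u ∈ (Ideal.span (Set.range y)) ^ (deg u) := by
  rw [deg, ← Finset.prod_pow_eq_pow_sum]
  exact Ideal.prod_mem_prod fun i _ =>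
    Ideal.pow_mem_pow (Ideal.subset_span (Set.mem_range_self i)) _

/-- ideal generated by monomials strictly above `u` in deg-lex order -/
def hiIdeal (y : Fin d → R) (u : Fin d → ℕ) : Ideal R :=
  Ideal.span (mono y '' {v | mlt u v})

/-- ideal generated by monomials `⪰ u` in deg-lex order -/
def geIdeal (y : Fin d → R) (u : Fin d → ℕ) : Ideal R :=
  Ideal.span (mono y '' {v | mle u v})

lemma hiIdeal_le_geIdeal (y : Fin d → R) (u : Fin d → ℕ) :
    hiIdeal y u ≤ geIdeal y u :=
  Ideal.span_mono (Set.image_mono fun v hv => mle_of_mlt hv)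

lemma geIdeal_eq (y : Fin d → R) (u : Fin d → ℕ) :
    geIdeal y u = hiIdeal y u ⊔ Ideal.span {mono y u} := by
  rw [hiIdeal, geIdeal, ← Ideal.span_union]
  congr 1
  ext x
  constructor
  · rintro ⟨v, hv, rfl⟩
    rcases hv with hv | rfl
    · exact Or.inl ⟨v, hv, rfl⟩
    · exact Or.inr rfl
  · rintro (⟨v, hv, rfl⟩ | h)
    · exact ⟨v, mle_of_mlt hv, rfl⟩
    · exact ⟨u, mle_refl u, (Set.mem_singleton_iff.1 h).symm⟩

lemma geIdeal_le_of_mle (y : Fin d → R) {u v : Fin d → ℕ} (h : mle u v) :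
    geIdeal y v ≤ geIdeal y u :=
  Ideal.span_mono (Set.image_mono fun w hw => mle_trans h hw)

lemma geIdeal_le_hiIdeal_of_mlt (y : Fin d → R) {u v : Fin d → ℕ} (h : mlt u v) :
    geIdeal y v ≤ hiIdeal y u :=
  Ideal.span_mono (Set.image_mono fun w hw => mlt_of_mlt_of_mle h hw)

lemma mono_mem_geIdeal (y : Fin d → R) {u v : Fin d → ℕ} (h : mle u v) :
    mono y v ∈ geIdeal y u :=
  Ideal.subset_span ⟨v, h, rfl⟩

lemma mono_mem_hiIdeal (y : Fin d → R) {u v : Fin d → ℕ} (h : mlt u v) :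
    mono y v ∈ hiIdeal y u :=
  Ideal.subset_span ⟨v, h, rfl⟩

lemma hiIdeal_mul_hiIdeal (y : Fin d → R) (u v : Fin d → ℕ) :
    hiIdeal y u * hiIdeal y v ≤ hiIdeal y (u + v) := by
  rw [hiIdeal, hiIdeal, Ideal.span_mul_span']
  rw [Ideal.span_le]
  rintro x ⟨a, ⟨va, hva, rfl⟩, b, ⟨vb, hvb, rfl⟩, rfl⟩
  show mono y va * mono y vb ∈ _
  rw [← mono_add]
  exact Ideal.subset_span ⟨va + vb, mlt_add hva hvb, rfl⟩

lemma mono_mul_hiIdeal (y : Fin d → R) (w u : Fin d → ℕ) {x : R} (hx : x ∈ hiIdeal y u) :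
    mono y w * x ∈ hiIdeal y (w + u) := by
  have : Ideal.span {mono y w} * hiIdeal y u ≤ hiIdeal y (w + u) := by
    rw [hiIdeal, hiIdeal, Ideal.span_singleton_mul_le_iff]
    intro x hx
    refine Submodule.span_induction ?_ ?_ ?_ ?_ hx
    · rintro z ⟨v, hv, rfl⟩
      rw [← mono_add]
      exact Ideal.subset_span ⟨w + v, mlt_add_left w hv, rfl⟩
    · simp
    · intro a b _ _ h1 h2; rw [mul_add]; exact add_mem h1 h2
    · intro r a _ h1; rw [mul_smul_comm]; exact Ideal.mul_mem_left _ _ h1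
  exact this (Ideal.mul_mem_mul (Ideal.subset_span rfl) hx)

lemma hiIdeal_pow (y : Fin d → R) (u : Fin d → ℕ) {k : ℕ} (hk : 1 ≤ k) :
    (hiIdeal y u) ^ k ≤ hiIdeal y (k • u) := by
  induction k with
  | zero => omega
  | succ n ih =>
    rcases Nat.eq_or_lt_of_le hk with h | h
    · simp [← h, one_smul]
    · have hn : 1 ≤ n := by omega
      rw [pow_succ, succ_nsmul]
      calc hiIdeal y u ^ n * hiIdeal y u ≤ hiIdeal y (n • u) * hiIdeal y u :=
            Ideal.mul_mono_left (ih hn)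
        _ ≤ hiIdeal y (n • u + u) := hiIdeal_mul_hiIdeal y _ _

end AuxCount
namespace AuxCount

variable {d : ℕ} {R : Type*} [CommRing R]

lemma key_pow (y : Fin d → R) (J : Ideal R) {k : ℕ} (hk : 1 ≤ k) {w u : Fin d → ℕ}
    (hu : ∀ i, k * w i ≤ u i) (hw : mono y w ∈ J ⊔ hiIdeal y w) :
    mono y u ∈ J ^ k ⊔ hiIdeal y u := by
  obtain ⟨f, hf, g, hg, hfg⟩ := Submodule.mem_sup.1 hw
  have hf' : f = mono y w + -g := by rw [← hfg]; ring
  have hexp : f ^ k = (∑ m ∈ Finset.range k, mono y w ^ m * (-g) ^ (k - m) * (k.choose m))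
      + mono y (k • w) := by
    rw [hf', add_pow, Finset.sum_range_succ]
    simp [mono_pow]
  have hS : (∑ m ∈ Finset.range k, mono y w ^ m * (-g) ^ (k - m) * (k.choose m)) ∈
      hiIdeal y (k • w) := by
    refine Submodule.sum_mem _ fun m hm => ?_
    have hmk : m < k := Finset.mem_range.1 hm
    have h1 : (-g) ^ (k - m) ∈ hiIdeal y ((k - m) • w) := by
      refine hiIdeal_pow y w (by omega) ?_
      exact Ideal.pow_mem_pow (neg_mem hg) _
    have h2 : mono y w ^ m * (-g) ^ (k - m) ∈ hiIdeal y (m • w + (k - m) • w) := by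
      rw [mono_pow]
      exact mono_mul_hiIdeal y _ _ h1
    have h3 : m • w + (k - m) • w = k • w := by
      rw [← add_smul]; congr 1; omega
    rw [h3] at h2
    exact Ideal.mul_mem_right _ _ h2
  have hkw : mono y (k • w) ∈ J ^ k ⊔ hiIdeal y (k • w) := by
    have : mono y (k • w) = f ^ k - (∑ m ∈ Finset.range k,
        mono y w ^ m * (-g) ^ (k - m) * (k.choose m)) := by rw [hexp]; ring
    rw [this]
    exact sub_mem (Submodule.mem_sup_left (Ideal.pow_mem_pow hf k))
      (Submodule.mem_sup_right hS)
  set c : Fin d → ℕ := fun i => u i - k * w i with hc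
  have hcu : c + k • w = u := by
    funext i
    have := hu i
    simp only [Pi.add_apply, Pi.smul_apply, smul_eq_mul, hc]
    omega
  have hmu : mono y u = mono y c * mono y (k • w) := by
    rw [← mono_add, hcu]
  obtain ⟨p, hp, q, hq, hpq⟩ := Submodule.mem_sup.1 hkw
  rw [hmu, ← hpq, mul_add]
  refine Submodule.add_mem _ (Submodule.mem_sup_left (Ideal.mul_mem_left _ _ hp)) ?_
  refine Submodule.mem_sup_right ?_
  have := mono_mul_hiIdeal y c (k • w) hq
  rwa [hcu] at this

/-- the box of exponents of total degree at most `N` -/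
def bBox (d N : ℕ) : Finset (Fin d → ℕ) :=
  (Fintype.piFinset fun _ : Fin d => Finset.range (N + 1)).filter fun u => deg u ≤ N

lemma mem_bBox {d N : ℕ} {u : Fin d → ℕ} : u ∈ bBox d N ↔ deg u ≤ N := by
  constructor
  · intro h; exact (Finset.mem_filter.1 h).2
  · intro h
    refine Finset.mem_filter.2 ⟨Fintype.mem_piFinset.2 fun i => ?_, h⟩
    refine Finset.mem_range.2 ?_
    have : u i ≤ deg u := Finset.single_le_sum (f := u) (fun j _ => Nat.zero_le _)
      (Finset.mem_univ i)
    omega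

lemma bBox_card (d N : ℕ) : (bBox d N).card ≤ (N + 1) ^ d := by
  calc (bBox d N).card ≤ (Fintype.piFinset fun _ : Fin d => Finset.range (N + 1)).card :=
        Finset.card_le_card (Finset.filter_subset _ _)
    _ = (N + 1) ^ d := by simp [Fintype.card_piFinset]

open scoped Classical in
/-- exponents `u` of degree at most `N` whose monomial is "essential" for `C` -/
noncomputable def efin (y : Fin d → R) (C : Ideal R) (N : ℕ) : Finset (Fin d → ℕ) :=
  (bBox d N).filter fun u => mono y u ∉ C ⊔ hiIdeal y u

open scoped Classical in
lemma mem_efin {y : Fin d → R} {C : Ideal R} {N : ℕ} {u : Fin d → ℕ} :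
    u ∈ efin y C N ↔ deg u ≤ N ∧ mono y u ∉ C ⊔ hiIdeal y u := by
  simp [efin, mem_bBox]

lemma efin_pow_card (y : Fin d → R) (J : Ideal R) {k N₁ : ℕ} (hk : 1 ≤ k) :
    (efin y (J ^ k) (k * (N₁ + 1) - 1)).card ≤ (efin y J N₁).card * k ^ d := by
  classical
  have hcard : ((efin y J N₁) ×ˢ (Finset.univ : Finset (Fin d → Fin k))).card
      = (efin y J N₁).card * k ^ d := by
    rw [Finset.card_product]
    congr 1
    simp [Fintype.card_fun]
  rw [← hcard]
  have hmap : ∀ u ∈ efin y (J ^ k) (k * (N₁ + 1) - 1), (fun i => u i / k) ∈ efin y J N₁ := by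
    intro u hu
    obtain ⟨hdeg, hess⟩ := mem_efin.1 hu
    refine mem_efin.2 ⟨?_, ?_⟩
    · have h1 : k * deg (fun i => u i / k) ≤ deg u := by
        rw [deg, deg, Finset.mul_sum]
        refine Finset.sum_le_sum fun i _ => ?_
        rw [mul_comm]
        exact Nat.div_mul_le_self _ _
      by_contra hcon
      push_neg at hcon
      have h3 : k * (N₁ + 1) ≤ k * deg (fun i => u i / k) := Nat.mul_le_mul_left _ hcon
      have h4 : k * (N₁ + 1) ≤ deg u := h3.trans h1
      have h5 : 1 ≤ k * (N₁ + 1) := Nat.one_le_iff_ne_zero.2 (by positivity)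
      exact absurd (h4.trans hdeg) (Nat.not_le.2 (Nat.sub_lt h5 one_pos))
    · intro hmem
      exact hess (key_pow y J hk (fun i => by
        simpa [mul_comm] using Nat.div_mul_le_self (u i) k) hmem)
  refine Finset.card_le_card_of_injOn
    (fun u => (fun i => u i / k, fun i => (⟨u i % k, Nat.mod_lt _ (by omega)⟩ : Fin k))) ?_ ?_
  · intro u hu
    exact Finset.mem_product.2 ⟨hmap u hu, Finset.mem_univ _⟩
  · intro u hu v hv huv
    simp only [Prod.mk.injEq] at huv
    funext i
    have h1 : u i / k = v i / k := congrFun huv.1 i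
    have h2 : u i % k = v i % k := by
      have := congrFun huv.2 i
      exact Fin.mk.inj_iff.1 this
    calc u i = k * (u i / k) + u i % k := (Nat.div_add_mod (u i) k).symm
      _ = k * (v i / k) + v i % k := by rw [h1, h2]
      _ = v i := Nat.div_add_mod (v i) k

end AuxCount

namespace AuxCount

variable {α : Type*} [Lattice α] [IsModularLattice α]

open scoped Classical in
/-- Key lattice counting lemma: a strict chain confined between `a T` and `a 0`,
where each interval `[a (i+1), a i]` has at most two elements, has length at most
the number of non-trivial intervals. -/
lemma chain_le_card_filter {T n : ℕ} (a : ℕ → α) (ha : ∀ i, a (i + 1) ≤ a i)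
    (hsimple : ∀ i < T, ∀ x, a (i + 1) ≤ x → x ≤ a i → x = a (i + 1) ∨ x = a i)
    (x : Fin (n + 1) → α) (hx : StrictMono x)
    (hbot : a T ≤ x 0) (htop : x (Fin.last n) ≤ a 0) :
    n ≤ ((Finset.range T).filter fun i => a (i + 1) ≠ a i).card := by
  classical
  set ψ : Fin n → ℕ → α := fun j i => x j.castSucc ⊔ (x j.succ ⊓ a i) with hψ
  have hψ0 : ∀ j, ψ j 0 = x j.succ := by
    intro j
    have h1 : x j.succ ⊓ a 0 = x j.succ :=
      inf_eq_left.2 ((hx.monotone (Fin.le_last _)).trans htop)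
    rw [hψ]; dsimp only; rw [h1]
    exact sup_eq_right.2 (hx (Fin.castSucc_lt_succ (i := j))).le
  have hψT : ∀ j, ψ j T = x j.castSucc := by
    intro j
    have h1 : x j.succ ⊓ a T ≤ x j.castSucc :=
      inf_le_right.trans (hbot.trans (hx.monotone (Fin.zero_le _)))
    rw [hψ]; dsimp only
    exact sup_eq_left.2 h1
  have hmono : ∀ j i, ψ j (i + 1) ≤ ψ j i :=
    fun j i => sup_le_sup_left (inf_le_inf_left _ (ha i)) _
  have hex : ∀ j : Fin n, ∃ i, i < T ∧ ψ j i ≠ ψ j (i + 1) := by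
    intro j
    by_contra hc
    push_neg at hc
    have hconst : ∀ i, i ≤ T → ψ j 0 = ψ j i := by
      intro i hi
      induction i with
      | zero => rfl
      | succ i ih => exact (ih (by omega)).trans (hc i (by omega))
    have := (hψ0 j).symm.trans ((hconst T le_rfl).trans (hψT j))
    exact absurd this (hx (Fin.castSucc_lt_succ (i := j))).ne'
  have hex' : ∀ j : Fin n, ∃ i, ψ j i ≠ ψ j (i + 1) ∧ i < T := by
    intro j; obtain ⟨i, h1, h2⟩ := hex j; exact ⟨i, h2, h1⟩
  set φ : Fin n → ℕ := fun j => Nat.find (hex' j) with hφ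
  have hφspec : ∀ j, ψ j (φ j) ≠ ψ j (φ j + 1) ∧ φ j < T := fun j => Nat.find_spec (hex' j)
  have hstar : ∀ j : Fin n, a (φ j) ≤ (x j.succ ⊓ a (φ j)) ⊔ a (φ j + 1) := by
    intro j
    obtain ⟨hne, hlt⟩ := hφspec j
    set i := φ j
    have ht1 : (x j.succ ⊓ a i) ⊔ a (i + 1) ≤ a i := sup_le inf_le_right (ha i)
    rcases hsimple i hlt _ le_sup_right ht1 with h | h
    · exfalso
      apply hne
      have h2 : x j.succ ⊓ a i ≤ a (i + 1) := le_sup_left.trans h.le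
      have h3 : x j.succ ⊓ a i = x j.succ ⊓ a (i + 1) :=
        le_antisymm (le_inf inf_le_left h2) (inf_le_inf_left _ (ha i))
      rw [hψ]; dsimp only; rw [h3]
    · exact h.ge
  have hinj : ∀ j j' : Fin n, j < j' → φ j ≠ φ j' := by
    intro j j' hjj' heq
    obtain ⟨hne, hlt⟩ := hφspec j'
    have hstarj : a (φ j') ≤ (x j.succ ⊓ a (φ j')) ⊔ a (φ j' + 1) := by
      rw [← heq]; exact hstar j
    have hle1 : x j.succ ≤ x j'.castSucc := by
      apply hx.monotone
      simp only [Fin.le_def, Fin.val_succ, Fin.coe_castSucc]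
      exact hjj'
    have hle2 : x j.succ ≤ x j'.succ := hle1.trans (hx (Fin.castSucc_lt_succ (i := j'))).le
    have hclaim : x j'.succ ⊓ a (φ j')
        ≤ (x j.succ ⊓ a (φ j')) ⊔ (x j'.succ ⊓ a (φ j' + 1)) := by
      have hmod : ((x j.succ ⊓ a (φ j')) ⊔ a (φ j' + 1)) ⊓ x j'.succ
          = (x j.succ ⊓ a (φ j')) ⊔ (a (φ j' + 1) ⊓ x j'.succ) :=
        sup_inf_assoc_of_le _ (inf_le_left.trans hle2)
      calc x j'.succ ⊓ a (φ j')
          ≤ x j'.succ ⊓ ((x j.succ ⊓ a (φ j')) ⊔ a (φ j' + 1)) :=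
            inf_le_inf_left _ hstarj
        _ = ((x j.succ ⊓ a (φ j')) ⊔ a (φ j' + 1)) ⊓ x j'.succ := inf_comm _ _
        _ = (x j.succ ⊓ a (φ j')) ⊔ (a (φ j' + 1) ⊓ x j'.succ) := hmod
        _ = (x j.succ ⊓ a (φ j')) ⊔ (x j'.succ ⊓ a (φ j' + 1)) := by
            rw [inf_comm (a (φ j' + 1)) _]
    have habs : x j'.castSucc ⊔ ((x j.succ ⊓ a (φ j')) ⊔ (x j'.succ ⊓ a (φ j' + 1)))
        = x j'.castSucc ⊔ (x j'.succ ⊓ a (φ j' + 1)) := by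
      rw [← sup_assoc, sup_eq_left.2 (inf_le_left.trans hle1)]
    have hle3 : ψ j' (φ j') ≤ ψ j' (φ j' + 1) := by
      rw [hψ]; dsimp only
      calc x j'.castSucc ⊔ (x j'.succ ⊓ a (φ j'))
          ≤ x j'.castSucc ⊔ ((x j.succ ⊓ a (φ j')) ⊔ (x j'.succ ⊓ a (φ j' + 1))) :=
            sup_le_sup_left hclaim _
        _ = x j'.castSucc ⊔ (x j'.succ ⊓ a (φ j' + 1)) := habs
    exact hne (le_antisymm hle3 (hmono j' (φ j')))
  have hmapsto : ∀ j : Fin n, φ j ∈ (Finset.range T).filter fun i => a (i + 1) ≠ a i := by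
    intro j
    obtain ⟨hne, hlt⟩ := hφspec j
    refine Finset.mem_filter.2 ⟨Finset.mem_range.2 hlt, ?_⟩
    intro hcon
    apply hne
    rw [hψ]; dsimp only; rw [hcon]
  calc n = (Finset.univ : Finset (Fin n)).card := by simp
    _ ≤ ((Finset.range T).filter fun i => a (i + 1) ≠ a i).card := by
        refine Finset.card_le_card_of_injOn φ (fun j _ => hmapsto j) ?_
        intro j _ j' _ heq
        by_contra hne
        rcases lt_or_gt_of_ne hne with h | h
        · exact hinj j j' h heq
        · exact hinj j' j h heq.symm

end AuxCount

namespace AuxCount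

variable {d : ℕ} {R : Type*} [CommRing R]

instance : IsTrans (Fin d → ℕ) mle := ⟨fun _ _ _ => mle_trans⟩
instance : IsAntisymm (Fin d → ℕ) mle := ⟨fun _ _ => mle_antisymm⟩
instance : IsTotal (Fin d → ℕ) mle := ⟨mle_total⟩
noncomputable instance : DecidableRel (@mle d) := fun _ _ => Classical.propDecidable _

lemma maximal_mul_mono_mem [IsLocalRing R] {y : Fin d → R}
    (hm : Ideal.span (Set.range y) = IsLocalRing.maximalIdeal R) {r : R}
    (hr : r ∈ IsLocalRing.maximalIdeal R) (u : Fin d → ℕ) :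
    r * mono y u ∈ hiIdeal y u := by
  rw [← hm] at hr
  refine Submodule.span_induction ?_ ?_ ?_ ?_ hr
  · rintro z ⟨t, rfl⟩
    have h1 : mono y (Pi.single t 1) = y t := by
      rw [mono]
      rw [Finset.prod_eq_single t (fun j _ hj => by simp [Pi.single_eq_of_ne hj]) (by simp)]
      simp
    have h2 : y t * mono y u = mono y (Pi.single t 1 + u) := by
      rw [mono_add, h1]
    rw [h2]
    refine mono_mem_hiIdeal y ?_
    have h3 : mlt (0 : Fin d → ℕ) (Pi.single t 1) := by
      refine mlt_of_deg_lt ?_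
      have hdeg1 : deg (Pi.single t 1 : Fin d → ℕ) = 1 := by simp [deg]
      have hdeg0 : deg (0 : Fin d → ℕ) = 0 := by simp [deg]
      omega
    have := mlt_add_right u h3
    rwa [zero_add] at this
  · simp
  · intro a b _ _ h1 h2
    rw [add_mul]; exact add_mem h1 h2
  · intro c a _ h1
    rw [smul_eq_mul, mul_assoc]
    exact Ideal.mul_mem_left _ _ h1

variable [IsLocalRing R]

/-- Upper bound: any strict chain of ideals above `C` has length at most the number of
essential monomial exponents. -/
lemma chain_le_efin_card {y : Fin d → R}
    (hm : Ideal.span (Set.range y) = IsLocalRing.maximalIdeal R) {C : Ideal R} {N : ℕ}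
    (hC : ∀ u : Fin d → ℕ, N < deg u → mono y u ∈ C)
    {n : ℕ} (x : Fin (n + 1) → Ideal R) (hx : StrictMono x) (hCx : C ≤ x 0) :
    n ≤ (efin y C N).card := by
  classical
  set l : List (Fin d → ℕ) := (bBox d N).sort mle with hl
  set T : ℕ := l.length with hT
  have hsorted : List.Pairwise mle l := Finset.pairwise_sort _ _
  have hnodup : l.Nodup := Finset.sort_nodup _ _
  have hmeml : ∀ v : Fin d → ℕ, v ∈ l ↔ deg v ≤ N := by
    intro v; rw [hl, Finset.mem_sort, mem_bBox]
  have hpair : ∀ (i j : Fin l.length), i < j → mlt (l.get i) (l.get j) := by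
    intro i j hij
    refine mlt_of_mle_of_ne (List.pairwise_iff_get.1 hsorted i j hij) ?_
    intro hc
    exact absurd (List.nodup_iff_injective_get.1 hnodup hc) (Fin.ne_of_lt hij)
  have hpair' : ∀ (i j : Fin l.length), i ≤ j → mle (l.get i) (l.get j) := by
    intro i j hij
    rcases eq_or_lt_of_le hij with heq | h
    · rw [heq]; exact mle_refl _
    · exact mle_of_mlt (hpair i j h)
  set a : ℕ → Ideal R := fun i => if h : i < T then C ⊔ geIdeal y (l.get ⟨i, h⟩) else C
    with haa
  have hCle : ∀ i, C ≤ a i := by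
    intro i; rw [haa]; dsimp only; split <;> simp
  have hstep : ∀ (i : ℕ) (h : i < T), hiIdeal y (l.get ⟨i, h⟩) ≤ a (i + 1) := by
    intro i h
    rw [hiIdeal, Ideal.span_le]
    rintro z ⟨v, hv, rfl⟩
    by_cases hdv : deg v ≤ N
    · obtain ⟨j, hj⟩ := List.mem_iff_get.1 ((hmeml v).2 hdv)
      have hij : (⟨i, h⟩ : Fin l.length) < j := by
        by_contra hcon
        push_neg at hcon
        rcases eq_or_lt_of_le hcon with heq | hlt
        · rw [heq] at hj
          exact mlt_irrefl _ (hj ▸ hv)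
        · exact mlt_asymm (hj ▸ hv) (hpair _ _ hlt)
      have hi1 : i + 1 < T := by
        have h1 := j.isLt
        simp only [Fin.lt_def] at hij
        omega
      rw [haa]; dsimp only; rw [dif_pos hi1]
      have hle : mle (l.get ⟨i + 1, hi1⟩) (l.get j) := by
        refine hpair' _ _ ?_
        simp only [Fin.le_def]
        simp only [Fin.lt_def] at hij
        omega
      rw [← hj]
      exact Submodule.mem_sup_right (mono_mem_geIdeal y hle)
    · exact (hCle (i + 1)) (hC v (by omega))
  have hA : ∀ (i : ℕ) (h : i < T),
      a i = a (i + 1) ⊔ Ideal.span {mono y (l.get ⟨i, h⟩)} := by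
    intro i h
    refine le_antisymm ?_ ?_
    · conv_lhs => rw [haa]
      dsimp only; rw [dif_pos h, geIdeal_eq]
      refine sup_le (le_sup_of_le_left (hCle (i + 1))) (sup_le ?_ le_sup_right)
      exact le_sup_of_le_left (hstep i h)
    · refine sup_le ?_ ?_
      · -- a (i+1) ≤ a i
        rw [haa]; dsimp only; rw [dif_pos h]
        by_cases h1 : i + 1 < T
        · rw [dif_pos h1]
          refine sup_le_sup_left (geIdeal_le_of_mle y ?_) _
          exact hpair' ⟨i, h⟩ ⟨i + 1, h1⟩ (by simp [Fin.le_def])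
        · rw [dif_neg h1]; exact le_sup_left
      · rw [haa]; dsimp only; rw [dif_pos h]
        rw [Ideal.span_le]
        intro z hz
        rw [Set.mem_singleton_iff.1 hz]
        exact Submodule.mem_sup_right (mono_mem_geIdeal y (mle_refl _))
  have ha : ∀ i, a (i + 1) ≤ a i := by
    intro i
    by_cases h : i < T
    · rw [hA i h]; exact le_sup_left
    · have h1 : ¬ (i + 1 < T) := by omega
      rw [haa]; dsimp only; rw [dif_neg h, dif_neg h1]
  have hsimple : ∀ i < T, ∀ z : Ideal R, a (i + 1) ≤ z → z ≤ a i →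
      z = a (i + 1) ∨ z = a i := by
    intro i h z hz1 hz2
    by_cases hmem : mono y (l.get ⟨i, h⟩) ∈ z
    · right
      refine le_antisymm hz2 ?_
      rw [hA i h]
      refine sup_le hz1 ?_
      rw [Ideal.span_le]
      intro w hw
      rw [Set.mem_singleton_iff.1 hw]
      exact hmem
    · left
      refine le_antisymm ?_ hz1
      intro ξ hξ
      have hξ2 : ξ ∈ a (i + 1) ⊔ Ideal.span {mono y (l.get ⟨i, h⟩)} := by
        rw [← hA i h]; exact hz2 hξ
      obtain ⟨c, hc, w, hw, hcw⟩ := Submodule.mem_sup.1 hξ2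
      obtain ⟨r, hr⟩ := Ideal.mem_span_singleton'.1 hw
      by_cases hrm : r ∈ IsLocalRing.maximalIdeal R
      · have : w ∈ hiIdeal y (l.get ⟨i, h⟩) := by
          rw [← hr]; exact maximal_mul_mono_mem hm hrm _
        have : w ∈ a (i + 1) := hstep i h this
        rw [← hcw]
        exact add_mem hc this
      · exfalso
        have hru : IsUnit r := by
          by_contra hcon
          exact hrm (IsLocalRing.mem_maximalIdeal _ |>.2 hcon)
        have hwz : w ∈ z := by
          have h1 : c ∈ z := hz1 hc
          have h2 : ξ ∈ z := hξ
          have : w = ξ - c := by rw [← hcw]; ring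
          rw [this]; exact sub_mem h2 h1
        apply hmem
        have : mono y (l.get ⟨i, h⟩) = ↑hru.unit⁻¹ * w := by
          rw [← hr, ← mul_assoc, IsUnit.val_inv_mul, one_mul]
        rw [this]
        exact Ideal.mul_mem_left _ _ hwz
  -- endpoints
  have hT0 : 0 < T := by
    rw [hT]
    have : (0 : Fin d → ℕ) ∈ l := (hmeml 0).2 (by simp [deg])
    exact List.length_pos_iff.2 (List.ne_nil_of_mem this)
  have hl0 : l.get ⟨0, hT0⟩ = 0 := by
    obtain ⟨j, hj⟩ := List.mem_iff_get.1 ((hmeml 0).2 (by simp [deg]))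
    have h1 : mle (l.get ⟨0, hT0⟩) (l.get j) := hpair' _ _ (by simp [Fin.le_def])
    rw [hj] at h1
    exact mle_antisymm h1 (zero_mle _)
  have ha0 : a 0 = ⊤ := by
    rw [haa]; dsimp only; rw [dif_pos hT0, hl0]
    rw [eq_top_iff, ← Ideal.span_singleton_one]
    refine le_sup_of_le_right ?_
    rw [Ideal.span_le]
    intro w hw
    rw [Set.mem_singleton_iff.1 hw, ← mono_zero y]
    exact mono_mem_geIdeal y (mle_refl _)
  have haT : a T = C := by rw [haa]; dsimp only; rw [dif_neg (lt_irrefl T)]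
  have hmain := chain_le_card_filter a ha hsimple x hx (haT ▸ hCx) (le_top.trans ha0.ge)
  refine hmain.trans ?_
  refine Finset.card_le_card_of_injOn
    (fun i => if h : i < T then l.get ⟨i, h⟩ else 0) ?_ ?_
  · intro i hi
    obtain ⟨hiT, hane⟩ := Finset.mem_filter.1 hi
    have hiT' : i < T := Finset.mem_range.1 hiT
    dsimp only
    rw [dif_pos hiT']
    refine mem_efin.2 ⟨(hmeml _).1 (List.get_mem _ _), ?_⟩
    intro hcon
    apply hane
    refine le_antisymm (ha i) ?_
    rw [hA i hiT']
    refine sup_le le_rfl ?_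
    rw [Ideal.span_le]
    intro w hw
    rw [Set.mem_singleton_iff.1 hw]
    rcases Submodule.mem_sup.1 hcon with ⟨p, hp, q, hq, hpq⟩
    rw [← hpq]
    exact add_mem (hCle (i + 1) hp) (hstep i hiT' hq)
  · intro i hi j hj heq
    have hiT : i < T := Finset.mem_range.1 (Finset.mem_filter.1 hi).1
    have hjT : j < T := Finset.mem_range.1 (Finset.mem_filter.1 hj).1
    simp only at heq
    rw [dif_pos hiT, dif_pos hjT] at heq
    have := List.nodup_iff_injective_get.1 hnodup heq
    exact Fin.mk.inj_iff.1 this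

/-- Lower bound: there is a strict chain of ideals above `C` of length the number of
essential monomial exponents. -/
lemma exists_chain_efin {y : Fin d → R} (C : Ideal R) (N : ℕ) :
    ∃ x : Fin ((efin y C N).card + 1) → Ideal R, StrictMono x ∧ C ≤ x 0 := by
  classical
  set l : List (Fin d → ℕ) := (efin y C N).sort mle with hl
  have hlen : l.length = (efin y C N).card := Finset.length_sort _
  have hsorted : List.Pairwise mle l := Finset.pairwise_sort _ _
  have hnodup : l.Nodup := Finset.sort_nodup _ _
  have hmeml : ∀ v : Fin d → ℕ, v ∈ l ↔ v ∈ efin y C N := fun v => Finset.mem_sort _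
  have hpair : ∀ (i j : Fin l.length), i < j → mlt (l.get i) (l.get j) := by
    intro i j hij
    refine mlt_of_mle_of_ne (List.pairwise_iff_get.1 hsorted i j hij) ?_
    intro hc
    exact absurd (List.nodup_iff_injective_get.1 hnodup hc) (Fin.ne_of_lt hij)
  set M := (efin y C N).card with hM
  have hess : ∀ (i : ℕ) (h : i < l.length),
      mono y (l.get ⟨i, h⟩) ∉ C ⊔ hiIdeal y (l.get ⟨i, h⟩) :=
    fun i h => (mem_efin.1 ((hmeml _).1 (List.get_mem _ _))).2
  set b : ℕ → Ideal R := fun t => if t = 0 then C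
    else if h : M - t < l.length then C ⊔ geIdeal y (l.get ⟨M - t, h⟩) else ⊤ with hb
  have hlt : ∀ t, t < M → b t < b (t + 1) := by
    intro t ht
    have hM1 : 1 ≤ M := by omega
    have hidx : M - (t + 1) < l.length := by omega
    have hbt1 : b (t + 1) = C ⊔ geIdeal y (l.get ⟨M - (t + 1), hidx⟩) := by
      rw [hb]; dsimp only
      rw [if_neg (by omega : ¬ (t + 1 = 0)), dif_pos hidx]
    by_cases h0 : t = 0
    · subst h0
      have hb0 : b 0 = C := by rw [hb]; simp
      rw [hb0, hbt1]
      refine lt_of_le_of_ne le_sup_left ?_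
      intro hcon
      refine hess (M - 1) (by omega) ?_
      have h1 : mono y (l.get ⟨M - 1, by omega⟩) ∈ C ⊔ geIdeal y (l.get ⟨M - 1, by omega⟩) :=
        Submodule.mem_sup_right (mono_mem_geIdeal y (mle_refl _))
      have h2 : (⟨M - 1, by omega⟩ : Fin l.length) = ⟨M - (0 + 1), hidx⟩ := by
        congr 1
      rw [h2] at h1 ⊢
      rw [← hcon] at h1
      exact Submodule.mem_sup_left h1
    · have hidx2 : M - t < l.length := by omega
      have hbt : b t = C ⊔ geIdeal y (l.get ⟨M - t, hidx2⟩) := by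
        rw [hb]; dsimp only
        rw [if_neg h0, dif_pos hidx2]
      have hij : (⟨M - (t + 1), hidx⟩ : Fin l.length) < ⟨M - t, hidx2⟩ := by
        simp only [Fin.lt_def]; omega
      have hmlt := hpair _ _ hij
      rw [hbt, hbt1]
      refine lt_of_le_of_ne (sup_le_sup_left (geIdeal_le_of_mle y (mle_of_mlt hmlt)) _) ?_
      intro hcon
      refine hess (M - (t + 1)) hidx ?_
      have h1 : mono y (l.get ⟨M - (t + 1), hidx⟩) ∈
          C ⊔ geIdeal y (l.get ⟨M - (t + 1), hidx⟩) :=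
        Submodule.mem_sup_right (mono_mem_geIdeal y (mle_refl _))
      rw [← hcon] at h1
      rcases Submodule.mem_sup.1 h1 with ⟨p, hp, q, hq, hpq⟩
      rw [← hpq]
      exact Submodule.add_mem _ (Submodule.mem_sup_left hp)
        (Submodule.mem_sup_right (geIdeal_le_hiIdeal_of_mlt y hmlt hq))
  refine ⟨fun j => b (j : ℕ), ?_, ?_⟩
  · rw [Fin.strictMono_iff_lt_succ]
    intro j
    have h1 : ((j.castSucc : Fin (M + 1)) : ℕ) = (j : ℕ) := rfl
    have h2 : ((j.succ : Fin (M + 1)) : ℕ) = (j : ℕ) + 1 := rfl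
    rw [h1, h2]
    exact hlt _ j.isLt
  · have h0 : b 0 = C := by rw [hb]; simp
    exact h0.ge

end AuxCount


namespace AuxCount

lemma krullDim_le_of_chains {α : Type*} [Preorder α] {t : ℕ}
    (h : ∀ (n : ℕ) (x : Fin (n + 1) → α), StrictMono x → n ≤ t) :
    Order.krullDim α ≤ (t : WithBot ℕ∞) := by
  rw [Order.krullDim]
  refine iSup_le fun p => ?_
  have := h p.length p.toFun p.strictMono
  exact_mod_cast this

lemma le_krullDim_of_chain {α : Type*} [Preorder α] {t : ℕ} (x : Fin (t + 1) → α)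
    (hx : StrictMono x) : (t : WithBot ℕ∞) ≤ Order.krullDim α := by
  have := Order.LTSeries.length_le_krullDim (⟨t, x, fun i => hx (Fin.castSucc_lt_succ (i := i))⟩ :
    LTSeries α)
  exact_mod_cast this

lemma toNat_unbot_le {x : WithBot ℕ∞} {t : ℕ} (h : x ≤ (t : WithBot ℕ∞)) :
    (WithBot.unbotD 0 x).toNat ≤ t := by
  match x with
  | ⊥ => simp
  | (a : ℕ∞) =>
    have ha : a ≤ (t : ℕ∞) := by exact_mod_cast h
    match a with
    | ⊤ => simp at ha
    | (n : ℕ) =>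
      simpa using (by exact_mod_cast ha : n ≤ t)

lemma le_toNat_unbot {x : WithBot ℕ∞} {t T : ℕ} (h : (t : WithBot ℕ∞) ≤ x)
    (hT : x ≤ (T : WithBot ℕ∞)) : t ≤ (WithBot.unbotD 0 x).toNat := by
  match x with
  | ⊥ => exact absurd h (by simp)
  | (a : ℕ∞) =>
    have ha : (t : ℕ∞) ≤ a := by exact_mod_cast h
    have ha2 : a ≤ (T : ℕ∞) := by exact_mod_cast hT
    match a with
    | ⊤ => simp at ha2
    | (n : ℕ) => simpa using (by exact_mod_cast ha : t ≤ n)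

end AuxCount

namespace AuxCount

variable {d : ℕ} {R : Type*} [CommRing R] [IsLocalRing R]

lemma length_le_card' {y : Fin d → R}
    (hm : Ideal.span (Set.range y) = IsLocalRing.maximalIdeal R) {C C' : Ideal R} {N : ℕ}
    (hC : ∀ u : Fin d → ℕ, N < deg u → mono y u ∈ C) (hCC' : C ≤ C') :
    moduleLength R (R ⧸ C') ≤ (efin y C N).card := by
  apply toNat_unbot_le
  rw [Order.krullDim_eq_of_orderIso (Submodule.comapMkQRelIso C')]
  apply krullDim_le_of_chains
  intro n x hx
  refine chain_le_efin_card hm hC (fun j => (x j : Ideal R)) ?_ ?_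
  · exact fun a b h => Subtype.coe_lt_coe.2 (hx h)
  · exact hCC'.trans (x 0).2

lemma card_le_length {y : Fin d → R}
    (hm : Ideal.span (Set.range y) = IsLocalRing.maximalIdeal R) {C : Ideal R} {N : ℕ}
    (hC : ∀ u : Fin d → ℕ, N < deg u → mono y u ∈ C) :
    (efin y C N).card ≤ moduleLength R (R ⧸ C) := by
  refine le_toNat_unbot (T := (efin y C N).card) ?_ ?_
  · rw [Order.krullDim_eq_of_orderIso (Submodule.comapMkQRelIso C)]
    obtain ⟨x, hx, hCx⟩ := exists_chain_efin (y := y) C N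
    refine le_krullDim_of_chain (fun j => ⟨x j, hCx.trans (hx.monotone (Fin.zero_le _))⟩) ?_
    exact fun a b h => Subtype.mk_lt_mk.2 (hx h)
  · rw [Order.krullDim_eq_of_orderIso (Submodule.comapMkQRelIso C)]
    apply krullDim_le_of_chains
    intro n x hx
    refine chain_le_efin_card hm hC (fun j => (x j : Ideal R)) ?_ ?_
    · exact fun a b h => Subtype.coe_lt_coe.2 (hx h)
    · exact (x 0).2

lemma length_pow_le {y : Fin d → R}
    (hm : Ideal.span (Set.range y) = IsLocalRing.maximalIdeal R) {J : Ideal R} {N₁ : ℕ}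
    (hJ : ∀ u : Fin d → ℕ, N₁ < deg u → mono y u ∈ J) {k : ℕ} (hk : 1 ≤ k)
    (hJk : ∀ u : Fin d → ℕ, (k * (N₁ + 1) - 1 : ℕ) < deg u → mono y u ∈ J ^ k) :
    moduleLength R (R ⧸ (J ^ k)) ≤ moduleLength R (R ⧸ J) * k ^ d :=
  calc moduleLength R (R ⧸ (J ^ k)) ≤ (efin y (J ^ k) (k * (N₁ + 1) - 1)).card :=
        length_le_card' hm hJk le_rfl
    _ ≤ (efin y J N₁).card * k ^ d := efin_pow_card y J hk
    _ ≤ moduleLength R (R ⧸ J) * k ^ d :=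
        Nat.mul_le_mul_right _ (card_le_length hm hJ)

lemma efin_subset_bBox {y : Fin d → R} {C : Ideal R} {N : ℕ} :
    efin y C N ⊆ bBox d N :=
  fun _ hu => mem_bBox.2 (mem_efin.1 hu).1

lemma length_le_box {y : Fin d → R}
    (hm : Ideal.span (Set.range y) = IsLocalRing.maximalIdeal R) {C C' : Ideal R} {N : ℕ}
    (hC : ∀ u : Fin d → ℕ, N < deg u → mono y u ∈ C) (hCC' : C ≤ C') :
    moduleLength R (R ⧸ C') ≤ (N + 1) ^ d :=
  (length_le_card' hm hC hCC').trans
    ((Finset.card_le_card efin_subset_bBox).trans (bBox_card d N))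

end AuxCount



open AuxCount

theorem limit_exists_of_graded_family_regular
    {R : Type*} [CommRing R] [IsLocalRing R]
    (hreg : IsRegularLocalRing' R)
    (d : ℕ) (hd : 0 < d) (hdim : ringKrullDim R = d)
    -- {I n} is a graded family of m_R-primary ideals
    (I : ℕ → Ideal R) (hI0 : I 0 = ⊤) (hIgr : ∀ i j, I i * I j ≤ I (i + j))
    (hprim : ∀ n, 0 < n → (I n).IsPrimary ∧ (I n).radical = maximalIdeal R) :
    ∃ L : ℝ,
      Tendsto (fun n : ℕ => (moduleLength R (R ⧸ I n) : ℝ) / (n : ℝ) ^ d) atTop (𝓝 L) := by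

  classical
  obtain ⟨hnoeth, s, hspan, hcard⟩ := hreg
  haveI : IsNoetherianRing R := hnoeth
  have hsd : s.card = d := by
    have h : (s.card : WithBot ℕ∞) = (d : WithBot ℕ∞) := by rw [hcard, hdim]
    exact_mod_cast h
  obtain ⟨y, hy⟩ : ∃ y : Fin d → R, Ideal.span (Set.range y) = maximalIdeal R := by
    have hlen : s.toList.length = d := by rw [Finset.length_toList, hsd]
    refine ⟨fun i => s.toList.get (Fin.cast hlen.symm i), ?_⟩
    rw [← hspan]
    congr 1
    ext a
    constructor
    · rintro ⟨i, rfl⟩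
      exact Finset.mem_coe.2 (Finset.mem_toList.1 (List.get_mem _ _))
    · intro ha
      obtain ⟨n, hn⟩ := List.mem_iff_get.1 (Finset.mem_toList.2 ha)
      exact ⟨Fin.cast hlen n, by simpa using hn⟩
  have hNof : ∀ n, 0 < n → ∃ N : ℕ, maximalIdeal R ^ (N + 1) ≤ I n := by
    intro n hn
    obtain ⟨t, ht⟩ := Ideal.exists_radical_pow_le_of_fg (I n) (by
      rw [(hprim n hn).2]; exact IsNoetherian.noetherian _)
    rw [(hprim n hn).2] at ht
    exact ⟨t, le_trans (Ideal.pow_le_pow_right (show t ≤ t + 1 by omega)) ht⟩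
  have hgen : ∀ (C : Ideal R) (N : ℕ), maximalIdeal R ^ (N + 1) ≤ C →
      ∀ u : Fin d → ℕ, N < deg u → mono y u ∈ C := by
    intro C N hNC u hu
    refine hNC (Ideal.pow_le_pow_right (show N + 1 ≤ deg u by omega) ?_)
    exact hy ▸ mono_mem_pow y u
  obtain ⟨c₁, hc₁⟩ := hNof 1 one_pos
  set c := c₁ + 1 with hcdef
  have hc : maximalIdeal R ^ c ≤ I 1 := hc₁
  have hc1 : 1 ≤ c := by omega
  have hIpow : ∀ n₁ q : ℕ, I n₁ ^ q ≤ I (q * n₁) := by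
    intro n₁ q
    induction q with
    | zero => rw [pow_zero, Ideal.one_eq_top, zero_mul, hI0]
    | succ q ih =>
      rw [pow_succ]
      calc I n₁ ^ q * I n₁ ≤ I (q * n₁) * I n₁ := Ideal.mul_mono_left ih
        _ ≤ I (q * n₁ + n₁) := hIgr _ _
        _ = I ((q + 1) * n₁) := by ring_nf
  have hmono_pow : ∀ n, 0 < n → maximalIdeal R ^ (c * n) ≤ I n := by
    intro n hn
    calc maximalIdeal R ^ (c * n) = (maximalIdeal R ^ c) ^ n := by rw [pow_mul]
      _ ≤ I 1 ^ n := Ideal.pow_right_mono hc n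
      _ ≤ I (n * 1) := hIpow 1 n
      _ = I n := by rw [mul_one]
  have hcn1 : ∀ n, 0 < n → 1 ≤ c * n := by
    intro n hn
    simpa using Nat.mul_le_mul hc1 hn
  have hbound : ∀ n, 0 < n → moduleLength R (R ⧸ I n) ≤ (c * n) ^ d := by
    intro n hn
    have h1 : maximalIdeal R ^ (c * n - 1 + 1) ≤ I n := by
      have he : c * n - 1 + 1 = c * n := by have := hcn1 n hn; omega
      rw [he]; exact hmono_pow n hn
    have h2 := length_le_box hy (hgen _ _ h1) le_rfl
    have he : c * n - 1 + 1 = c * n := by have := hcn1 n hn; omega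
    rwa [he] at h2
  have hkey : ∀ n₁, 0 < n₁ → ∀ m, 1 ≤ m / n₁ →
      moduleLength R (R ⧸ I m) ≤ moduleLength R (R ⧸ I n₁) * (m / n₁ + c * n₁) ^ d := by
    intro n₁ hn₁ m hq
    obtain ⟨N₁, hN₁⟩ := hNof n₁ hn₁
    set q := m / n₁ with hqdef
    set bb := c * n₁ with hbbdef
    set k := q + bb with hkdef
    have hbb1 : 1 ≤ bb := hcn1 n₁ hn₁
    have hk1 : 1 ≤ k := by omega
    have hJm : I n₁ ^ k ≤ I m := by
      have hr : n₁ * q + m % n₁ = m := Nat.div_add_mod m n₁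
      have hrlt : m % n₁ ≤ n₁ := le_of_lt (Nat.mod_lt _ hn₁)
      rcases Nat.eq_zero_or_pos (m % n₁) with hr0 | hrpos
      · have hm_eq : q * n₁ = m := by rw [mul_comm]; omega
        calc I n₁ ^ k ≤ I n₁ ^ q := Ideal.pow_le_pow_right (show q ≤ k by omega)
          _ ≤ I (q * n₁) := hIpow n₁ q
          _ = I m := by rw [hm_eq]
      · have h2 : I n₁ ^ bb ≤ I (m % n₁) := by
          calc I n₁ ^ bb ≤ maximalIdeal R ^ bb :=
                Ideal.pow_right_mono (le_maximalIdeal (hprim n₁ hn₁).1.ne_top) bb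
            _ ≤ maximalIdeal R ^ (c * (m % n₁)) :=
                Ideal.pow_le_pow_right (Nat.mul_le_mul_left c hrlt)
            _ ≤ I (m % n₁) := hmono_pow _ hrpos
        calc I n₁ ^ k = I n₁ ^ q * I n₁ ^ bb := pow_add _ _ _
          _ ≤ I (q * n₁) * I (m % n₁) := Ideal.mul_mono (hIpow n₁ q) h2
          _ ≤ I (q * n₁ + m % n₁) := hIgr _ _
          _ = I m := by rw [mul_comm]; rw [hr]
    have hJk_ideal : maximalIdeal R ^ (k * (N₁ + 1)) ≤ I n₁ ^ k := by
      rw [mul_comm k, pow_mul]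
      exact Ideal.pow_right_mono hN₁ k
    have hJkgen : ∀ u : Fin d → ℕ, (k * (N₁ + 1) - 1 : ℕ) < deg u → mono y u ∈ I n₁ ^ k := by
      intro u hu
      refine hgen _ (k * (N₁ + 1) - 1) ?_ u hu
      have h1 : 1 ≤ k * (N₁ + 1) := by
        simpa using Nat.mul_le_mul hk1 (Nat.le_add_left 1 N₁)
      have he : k * (N₁ + 1) - 1 + 1 = k * (N₁ + 1) := by omega
      rw [he]; exact hJk_ideal
    calc moduleLength R (R ⧸ I m) ≤ (efin y (I n₁ ^ k) (k * (N₁ + 1) - 1)).card :=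
          length_le_card' hy hJkgen hJm
      _ ≤ (efin y (I n₁) N₁).card * k ^ d := efin_pow_card y (I n₁) hk1
      _ ≤ moduleLength R (R ⧸ I n₁) * k ^ d :=
          Nat.mul_le_mul_right _ (card_le_length hy (hgen _ _ hN₁))
  -- ===== analytic part =====
  set g : ℕ → ℝ := fun n => (moduleLength R (R ⧸ I n) : ℝ) / (n : ℝ) ^ d with hg
  have hg0 : ∀ n, 0 ≤ g n := fun n => div_nonneg (Nat.cast_nonneg _) (by positivity)
  have hgB : ∀ᶠ n in atTop, g n ≤ (c : ℝ) ^ d := by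
    refine eventually_atTop.2 ⟨1, fun n hn => ?_⟩
    have hnpos : (0 : ℝ) < (n : ℝ) ^ d := by
      have : (0:ℝ) < (n:ℝ) := by exact_mod_cast hn
      positivity
    rw [hg]; dsimp only
    rw [div_le_iff₀ hnpos]
    calc (moduleLength R (R ⧸ I n) : ℝ) ≤ (((c * n) ^ d : ℕ) : ℝ) :=
          Nat.cast_le.2 (hbound n hn)
      _ = ((c : ℝ) * (n : ℝ)) ^ d := by push_cast; ring
      _ = (c : ℝ) ^ d * (n : ℝ) ^ d := mul_pow _ _ _
  have hbdd_le : IsBoundedUnder (· ≤ ·) atTop g := isBoundedUnder_of_eventually_le hgB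
  have hbdd_ge : IsBoundedUnder (· ≥ ·) atTop g :=
    isBoundedUnder_of_eventually_ge (Eventually.of_forall hg0)
  refine ⟨liminf g atTop, ?_⟩
  rw [tendsto_order]
  constructor
  · intro x hx
    exact eventually_lt_of_lt_liminf hx hbdd_ge
  · intro x hx
    set L := liminf g atTop with hL
    set mid := (L + x) / 2 with hmid
    have hmid1 : L < mid := by rw [hmid]; linarith
    have hmid2 : mid < x := by rw [hmid]; linarith
    have hfreq : ∃ᶠ n in atTop, g n < mid :=
      frequently_lt_of_liminf_lt hbdd_le.isCoboundedUnder_ge hmid1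
    obtain ⟨n₁, hn₁both⟩ := (hfreq.and_eventually (eventually_ge_atTop 1)).exists
    obtain ⟨hgn₁, hn₁1⟩ := hn₁both
    have hn₁pos : 0 < n₁ := hn₁1
    set bb := c * n₁ with hbb
    have hφ : Tendsto (fun q : ℕ => ((q : ℝ) + bb) / (q : ℝ)) atTop (𝓝 1) := by
      have h1 : Tendsto (fun q : ℕ => 1 + (bb : ℝ) / (q : ℝ)) atTop (𝓝 (1 + 0)) :=
        tendsto_const_nhds.add (tendsto_const_div_atTop_nhds_zero_nat _)
      rw [add_zero] at h1
      refine h1.congr' ?_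
      refine (eventually_ge_atTop 1).mono fun q hq => ?_
      have hq0 : (q : ℝ) ≠ 0 := Nat.cast_ne_zero.2 (by omega)
      field_simp
    have hφ2 : Tendsto (fun q : ℕ => (((q : ℝ) + bb) / (q : ℝ)) ^ d * mid) atTop (𝓝 mid) := by
      have h2 := (hφ.pow d).mul_const mid
      rwa [one_pow, one_mul] at h2
    have hev : ∀ᶠ q : ℕ in atTop, (((q : ℝ) + bb) / (q : ℝ)) ^ d * mid < x :=
      hφ2.eventually_lt_const hmid2
    obtain ⟨q₀, hq₀⟩ := eventually_atTop.1 hev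
    refine eventually_atTop.2 ⟨n₁ * (q₀ + 1), fun m hm => ?_⟩
    set q := m / n₁ with hq
    have hq1 : q₀ + 1 ≤ q := by
      rw [hq]
      rw [Nat.le_div_iff_mul_le hn₁pos]
      rw [mul_comm] at hm
      exact hm
    have hq1' : 1 ≤ q := by omega
    have hqm : q * n₁ ≤ m := by rw [hq]; exact Nat.div_mul_le_self m n₁
    have hqn₁pos : 0 < q * n₁ := Nat.mul_pos (by omega) hn₁pos
    have hmpos : 0 < m := by omega
    have hkey' := hkey n₁ hn₁pos m hq1'
    set A : ℝ := (moduleLength R (R ⧸ I n₁) : ℝ) with hA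
    have hA0 : 0 ≤ A := Nat.cast_nonneg _
    have h1 : (moduleLength R (R ⧸ I m) : ℝ) ≤ A * ((q : ℝ) + (bb : ℝ)) ^ d := by
      calc (moduleLength R (R ⧸ I m) : ℝ)
          ≤ ((moduleLength R (R ⧸ I n₁) * (q + bb) ^ d : ℕ) : ℝ) := Nat.cast_le.2 hkey'
        _ = A * ((q : ℝ) + (bb : ℝ)) ^ d := by push_cast; ring
    have hqn0 : (0 : ℝ) < ((q * n₁ : ℕ) : ℝ) ^ d := by
      have : (0:ℝ) < ((q * n₁ : ℕ) : ℝ) := by exact_mod_cast hqn₁pos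
      positivity
    have hm0 : (0 : ℝ) < (m : ℝ) ^ d := by
      have : (0:ℝ) < (m : ℝ) := by exact_mod_cast hmpos
      positivity
    have hqnm : ((q * n₁ : ℕ) : ℝ) ^ d ≤ (m : ℝ) ^ d := by
      refine pow_le_pow_left₀ (Nat.cast_nonneg _) ?_ d
      exact_mod_cast hqm
    have hstep1 : g m ≤ (A * ((q : ℝ) + bb) ^ d) / ((q * n₁ : ℕ) : ℝ) ^ d := by
      rw [hg]; dsimp only
      exact div_le_div₀ (by positivity) h1 hqn0 hqnm
    have hstep2 : (A * ((q : ℝ) + bb) ^ d) / ((q * n₁ : ℕ) : ℝ) ^ d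
        = (A / (n₁ : ℝ) ^ d) * (((q : ℝ) + bb) / (q : ℝ)) ^ d := by
      have hq0 : (q : ℝ) ≠ 0 := Nat.cast_ne_zero.2 (by omega)
      have hn₁0 : (n₁ : ℝ) ≠ 0 := Nat.cast_ne_zero.2 (by omega)
      have he : ((q * n₁ : ℕ) : ℝ) ^ d = (q : ℝ) ^ d * (n₁ : ℝ) ^ d := by
        push_cast; rw [mul_pow]
      rw [he, div_pow, div_mul_div_comm,
        div_eq_div_iff (mul_ne_zero (pow_ne_zero _ hq0) (pow_ne_zero _ hn₁0))
          (mul_ne_zero (pow_ne_zero _ hn₁0) (pow_ne_zero _ hq0))]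
      ring
    have hstep3 : (A / (n₁ : ℝ) ^ d) * (((q : ℝ) + bb) / (q : ℝ)) ^ d
        ≤ mid * (((q : ℝ) + bb) / (q : ℝ)) ^ d := by
      refine mul_le_mul_of_nonneg_right ?_ (by positivity)
      exact hgn₁.le
    have hfin : (((q : ℝ) + bb) / (q : ℝ)) ^ d * mid < x := hq₀ q (by omega)
    calc g m ≤ (A * ((q : ℝ) + bb) ^ d) / ((q * n₁ : ℕ) : ℝ) ^ d := hstep1
      _ = (A / (n₁ : ℝ) ^ d) * (((q : ℝ) + bb) / (q : ℝ)) ^ d := hstep2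
      _ ≤ mid * (((q : ℝ) + bb) / (q : ℝ)) ^ d := hstep3
      _ = (((q : ℝ) + bb) / (q : ℝ)) ^ d * mid := by ring
      _ < x := hfin
end

section
/- Suppose that R is a Noetherian local domain containing a field k, and k' is a finite separable field extension of k such that the residue field R/m_R embeds over k into k' (i.e. k ⊆ R/m_R ⊆ k'). Then S = R ⊗_k k' is a reduced Noetherian semilocal ring, and if p_1,…,p_r are the maximal ideals of S, then m_R S = p_1 ∩ ⋯ ∩ p_r. -/
open IsLocalRing TensorProduct

lemma aux_reduced (k : Type*) [Field k] (k' : Type*) [Field k'] [Algebra k k']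
    [FiniteDimensional k k'] [Algebra.IsSeparable k k']
    (F : Type*) [Field F] [Algebra k F] : IsReduced (F ⊗[k] k') := by
  classical
  let A := F ⊗[k] k'
  let b : Module.Basis _ k k' := Module.finBasis k k'
  let b' : Module.Basis _ F A := Algebra.TensorProduct.basis F b
  have key : ∀ z : k', (Algebra.lmul F A) ((1:F) ⊗ₜ z) = ((Algebra.lmul k k') z).baseChange F := by
    intro z
    ext w
    simp [A, Algebra.TensorProduct.tmul_mul_tmul]
  have htr : ∀ z : k',
      Algebra.trace F A ((1:F) ⊗ₜ z) = algebraMap k F (Algebra.trace k k' z) := by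
    intro z
    rw [Algebra.trace_apply, Algebra.trace_apply]
    show LinearMap.trace F A ((Algebra.lmul F A) ((1:F) ⊗ₜ z)) = _
    rw [key z, LinearMap.trace_baseChange]
  have hmat : (LinearMap.BilinForm.toMatrix b' (Algebra.traceForm F A)) =
      (LinearMap.BilinForm.toMatrix b (Algebra.traceForm k k')).map (algebraMap k F) := by
    ext i j
    rw [Matrix.map_apply, LinearMap.BilinForm.toMatrix_apply, LinearMap.BilinForm.toMatrix_apply,
      Algebra.traceForm_apply, Algebra.traceForm_apply]
    have hb : b' i * b' j = (1:F) ⊗ₜ (b i * b j) := by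
      rw [show b' i = (1:F) ⊗ₜ b i from Algebra.TensorProduct.basis_apply b i,
        show b' j = (1:F) ⊗ₜ b j from Algebra.TensorProduct.basis_apply b j,
        Algebra.TensorProduct.tmul_mul_tmul, one_mul]
    rw [hb, htr]
  have hnd : (Algebra.traceForm F A).Nondegenerate := by
    rw [LinearMap.BilinForm.nondegenerate_iff_det_ne_zero b', hmat,
      show (LinearMap.BilinForm.toMatrix b (Algebra.traceForm k k')).map ⇑(algebraMap k F)
        = (algebraMap k F).mapMatrix (LinearMap.BilinForm.toMatrix b (Algebra.traceForm k k')) from rfl,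
      ← RingHom.map_det]
    have := (LinearMap.BilinForm.nondegenerate_iff_det_ne_zero b).mp
      (traceForm_nondegenerate k k')
    simpa using this
  constructor
  intro x hx
  apply hnd.1 x
  intro y
  rw [Algebra.traceForm_apply, Algebra.trace_apply]
  have hxy : IsNilpotent (x * y) := (Commute.all x y).isNilpotent_mul_right hx
  have : IsNilpotent ((Algebra.lmul F A) (x * y)) := hxy.map (Algebra.lmul F A)
  have := LinearMap.isNilpotent_trace_of_isNilpotent this
  rwa [isNilpotent_iff_eq_zero] at this

theorem baseChange_reduced_semilocal
    {R : Type*} [CommRing R] [IsDomain R] [IsLocalRing R] [IsNoetherianRing R]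
    (k : Type*) [Field k] [Algebra k R]
    (k' : Type*) [Field k'] [Algebra k k'] [FiniteDimensional k k'] [Algebra.IsSeparable k k']
    -- the residue field R/m_R embeds over k into k'
    (hres : Nonempty (ResidueField R →ₐ[k] k')) :
    IsReduced (R ⊗[k] k') ∧ IsNoetherianRing (R ⊗[k] k') ∧
      {p : Ideal (R ⊗[k] k') | p.IsMaximal}.Finite ∧
      Ideal.map (algebraMap R (R ⊗[k] k')) (maximalIdeal R)
        = sInf {p : Ideal (R ⊗[k] k') | p.IsMaximal} := by
  classical
  -- Noetherian
  haveI hfinS : Module.Finite R (R ⊗[k] k') := inferInstance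
  haveI hNoeth : IsNoetherianRing (R ⊗[k] k') := by
    exact Algebra.FiniteType.isNoetherianRing R _
  -- reduced
  haveI hred : IsReduced (R ⊗[k] k') := by
    haveI := aux_reduced k k' (FractionRing R)
    let f : R →ₐ[k] FractionRing R := IsScalarTower.toAlgHom k R (FractionRing R)
    let gK := Algebra.TensorProduct.map f (AlgHom.id k k')
    have hco : ⇑gK = ⇑(LinearMap.rTensor k' f.toLinearMap) := by
      funext x
      induction x with
      | zero => simp
      | tmul a z => simp [gK]
      | add a b ha hb => simp [ha, hb]
    have hinj : Function.Injective gK := by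
      rw [hco]
      exact Module.Flat.rTensor_preserves_injective_linearMap f.toLinearMap
        (IsFractionRing.injective R (FractionRing R))
    constructor
    intro x hx
    apply hinj
    rw [map_zero]
    exact (hx.map gK).eq_zero
  -- the residue base change
  haveI : IsScalarTower k R (ResidueField R) := IsScalarTower.of_algebraMap_eq fun _ => rfl
  let f : R →ₐ[k] ResidueField R := IsScalarTower.toAlgHom k R (ResidueField R)
  let g := Algebra.TensorProduct.map f (AlgHom.id k k')
  have hfsurj : Function.Surjective f := by
    intro y
    obtain ⟨r, hr⟩ := residue_surjective (R := R) y
    exact ⟨r, hr⟩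
  have hgsurj : Function.Surjective g := by
    intro t
    induction t with
    | zero => exact ⟨0, map_zero _⟩
    | tmul a z =>
        obtain ⟨r, rfl⟩ := hfsurj a
        exact ⟨r ⊗ₜ z, by simp [g]⟩
    | add a b ha hb =>
        obtain ⟨x, rfl⟩ := ha
        obtain ⟨y, rfl⟩ := hb
        exact ⟨x + y, map_add _ _ _⟩
  set J := Ideal.map (algebraMap R (R ⊗[k] k')) (maximalIdeal R) with hJ
  have hker : RingHom.ker g = J := by
    rw [Algebra.TensorProduct.rTensor_ker f hfsurj]
    have h1 : RingHom.ker f = maximalIdeal R := by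
      ext x
      rw [RingHom.mem_ker, show f x = residue R x from rfl]
      exact Ideal.Quotient.eq_zero_iff_mem
    rw [h1, hJ]
    rfl
  -- T := κ ⊗ k'
  haveI hTred : IsReduced (ResidueField R ⊗[k] k') := aux_reduced k k' _
  haveI : Module.Finite (ResidueField R) (ResidueField R ⊗[k] k') := inferInstance
  haveI : IsArtinianRing (ResidueField R ⊗[k] k') :=
    isArtinian_of_tower (ResidueField R) inferInstance
  haveI : Nontrivial (ResidueField R ⊗[k] k') := by
    let q : (ResidueField R ⊗[k] k') →ₐ[k] k' :=
      Algebra.TensorProduct.lift hres.some (AlgHom.id k k') (fun _ _ => Commute.all _ _)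
    exact q.toRingHom.domain_nontrivial
  haveI : Nontrivial (R ⊗[k] k') := g.toRingHom.domain_nontrivial
  have hjac : Ideal.jacobson (⊥ : Ideal (ResidueField R ⊗[k] k')) = ⊥ := by
    obtain ⟨n, hn⟩ := IsArtinianRing.isNilpotent_jacobson_bot
      (R := ResidueField R ⊗[k] k')
    refine eq_bot_iff.mpr fun x hx => ?_
    have hxn : x ^ n = 0 := by
      have h2 : x ^ n ∈ (⊥ : Ideal (ResidueField R ⊗[k] k')).jacobson ^ n :=
        Ideal.pow_mem_pow hx n
      rw [hn] at h2
      rwa [Ideal.zero_eq_bot, Ideal.mem_bot] at h2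
    exact Ideal.mem_bot.mpr (IsNilpotent.eq_zero ⟨n, hxn⟩)
  haveI : Algebra.IsIntegral R (R ⊗[k] k') := Algebra.IsIntegral.of_finite R _
  have hJle : ∀ p : Ideal (R ⊗[k] k'), p.IsMaximal → J ≤ p := by
    intro p hp
    haveI := hp
    have hc : (p.comap (algebraMap R (R ⊗[k] k'))).IsMaximal :=
      Ideal.isMaximal_comap_of_isIntegral_of_isMaximal p
    have he : p.comap (algebraMap R (R ⊗[k] k')) = maximalIdeal R := eq_maximalIdeal hc
    rw [hJ, Ideal.map_le_iff_le_comap, he]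
  have hJjac : J.jacobson = J := by
    have h3 := Ideal.comap_jacobson_of_surjective (f := g.toRingHom) hgsurj
      (K := (⊥ : Ideal (ResidueField R ⊗[k] k')))
    rw [hjac, ← RingHom.ker_eq_comap_bot,
      show RingHom.ker g.toRingHom = RingHom.ker g from rfl, hker] at h3
    exact h3.symm
  have hset : {p : Ideal (R ⊗[k] k') | p.IsMaximal} = {p | J ≤ p ∧ p.IsMaximal} := by
    ext p
    exact ⟨fun h => ⟨hJle p h, h⟩, And.right⟩
  have hsinf : sInf {p : Ideal (R ⊗[k] k') | p.IsMaximal} = J := by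
    rw [hset]
    exact hJjac
  have hfin : {p : Ideal (R ⊗[k] k') | p.IsMaximal}.Finite := by
    have hTfin := IsArtinianRing.setOfPred_isMaximal_finite (ResidueField R ⊗[k] k')
    refine Set.Finite.subset (hTfin.image (Ideal.comap g.toRingHom)) ?_
    intro p hp
    haveI := hp
    have hkle : RingHom.ker g.toRingHom ≤ p := hker ▸ hJle p hp
    have hcm : Ideal.comap g.toRingHom (Ideal.map g.toRingHom p) = p := by
      rw [Ideal.comap_map_of_surjective g.toRingHom hgsurj, ← RingHom.ker_eq_comap_bot]
      exact sup_eq_left.mpr hkle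
    rcases Ideal.map_eq_top_or_isMaximal_of_surjective g.toRingHom hgsurj hp with htop | hmax
    · exfalso
      apply hp.ne_top
      rw [← hcm, htop, Ideal.comap_top]
    · exact ⟨Ideal.map g.toRingHom p, hmax, hcm⟩
  exact ⟨hred, hNoeth, hfin, hsinf.symm⟩
end

section
/- Suppose that R is a Noetherian ring and {I_i} is a graded family of ideals in R. Let s = limsup_{i} dim R/I_i (assumed finite). Then the set T(I_*) = {p ∈ Spec(R) : dim R/p = s and (I_j)_p ≠ R_p for arbitrarily large j} is a finite set. -/
open Order

section aux
variable {R : Type*} [CommRing R]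

/-- If `J ≤ p`, the coheight of `p` in `Spec R` is at most `dim R/J`. -/
lemma aux_coheight_le_ringKrullDim (J : Ideal R) (x : PrimeSpectrum R)
    (hJ : J ≤ x.asIdeal) :
    (Order.coheight x : WithBot ℕ∞) ≤ ringKrullDim (R ⧸ J) := by
  classical
  have hsurj : Function.Surjective (Ideal.Quotient.mk J) := Ideal.Quotient.mk_surjective
  -- the pushforward of a prime containing J
  have hprime : ∀ (y : PrimeSpectrum R), J ≤ y.asIdeal →
      (Ideal.map (Ideal.Quotient.mk J) y.asIdeal).IsPrime := by
    intro y hy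
    exact Ideal.map_isPrime_of_surjective hsurj (by rwa [Ideal.mk_ker])
  have hstrict : ∀ (a b : PrimeSpectrum R), J ≤ a.asIdeal → J ≤ b.asIdeal → a < b →
      Ideal.map (Ideal.Quotient.mk J) a.asIdeal < Ideal.map (Ideal.Quotient.mk J) b.asIdeal := by
    intro a b ha hb hab
    have hle : Ideal.map (Ideal.Quotient.mk J) a.asIdeal ≤
        Ideal.map (Ideal.Quotient.mk J) b.asIdeal :=
      Ideal.map_mono (le_of_lt hab)
    refine lt_of_le_of_ne hle ?_
    intro heq
    have ha' : Ideal.comap (Ideal.Quotient.mk J) (Ideal.map (Ideal.Quotient.mk J) a.asIdeal)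
        = a.asIdeal := by
      rw [Ideal.comap_map_of_surjective _ hsurj, ← RingHom.ker_eq_comap_bot, Ideal.mk_ker,
        sup_eq_left.mpr ha]
    have hb' : Ideal.comap (Ideal.Quotient.mk J) (Ideal.map (Ideal.Quotient.mk J) b.asIdeal)
        = b.asIdeal := by
      rw [Ideal.comap_map_of_surjective _ hsurj, ← RingHom.ker_eq_comap_bot, Ideal.mk_ker,
        sup_eq_left.mpr hb]
    have : a.asIdeal = b.asIdeal := by rw [← ha', ← hb', heq]
    exact absurd (PrimeSpectrum.ext this) (ne_of_lt hab)
  have hne : Nonempty (PrimeSpectrum (R ⧸ J)) :=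
    ⟨⟨Ideal.map (Ideal.Quotient.mk J) x.asIdeal, hprime x hJ⟩⟩
  rw [ringKrullDim, Order.krullDim_eq_iSup_length, WithBot.coe_le_coe]
  rw [Order.coheight_le_iff]
  intro P hP
  -- every element of P contains J
  have hall : ∀ i, J ≤ (P i).asIdeal := by
    intro i
    exact le_trans hJ (le_trans hP (P.monotone (Fin.zero_le i)))
  -- mapped series in Spec (R ⧸ J)
  let Q : LTSeries (PrimeSpectrum (R ⧸ J)) :=
    ⟨P.length, fun i => ⟨Ideal.map (Ideal.Quotient.mk J) (P i).asIdeal, hprime _ (hall i)⟩,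
      fun i => hstrict _ _ (hall _) (hall _) (P.step i)⟩
  calc (P.length : ℕ∞) = (Q.length : ℕ∞) := rfl
    _ ≤ ⨆ (q : LTSeries (PrimeSpectrum (R ⧸ J))), (q.length : ℕ∞) :=
        le_iSup (fun (q : LTSeries (PrimeSpectrum (R ⧸ J))) => (q.length : ℕ∞)) Q

/-- `dim R/p` is at most the coheight of `p` in `Spec R`. -/
lemma aux_ringKrullDim_le_coheight (x : PrimeSpectrum R) :
    ringKrullDim (R ⧸ x.asIdeal) ≤ (Order.coheight x : WithBot ℕ∞) := by
  classical
  have : Nontrivial (R ⧸ x.asIdeal) :=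
    Ideal.Quotient.nontrivial_iff.mpr x.isPrime.ne_top
  have hne : Nonempty (PrimeSpectrum (R ⧸ x.asIdeal)) :=
    ⟨⟨⊥, Ideal.bot_prime⟩⟩
  rw [ringKrullDim, Order.krullDim_eq_iSup_length, WithBot.coe_le_coe]
  apply iSup_le
  intro Q
  -- pull back the series to Spec R
  let P : LTSeries (PrimeSpectrum R) :=
    ⟨Q.length, fun i => ⟨Ideal.comap (Ideal.Quotient.mk x.asIdeal) (Q i).asIdeal,
        Ideal.IsPrime.comap _⟩,
      fun i => by
        have hQ : Q.toFun i.castSucc < Q.toFun i.succ := Q.step i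
        refine lt_of_le_of_ne (Ideal.comap_mono (le_of_lt hQ)) (fun h => (ne_of_lt hQ) ?_)
        exact PrimeSpectrum.ext (Ideal.comap_injective_of_surjective _
          Ideal.Quotient.mk_surjective h)⟩
  have hhead : x ≤ P.head := by
    show x.asIdeal ≤ Ideal.comap (Ideal.Quotient.mk x.asIdeal) (Q 0).asIdeal
    calc x.asIdeal = RingHom.ker (Ideal.Quotient.mk x.asIdeal) := Ideal.mk_ker.symm
      _ = Ideal.comap (Ideal.Quotient.mk x.asIdeal) ⊥ := rfl
      _ ≤ _ := Ideal.comap_mono bot_le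
  exact Order.length_le_coheight hhead

end aux

/-- The set `T(I_*)` of primes `p` with `dim R/p = s` such that `(I_j)_p ≠ R_p` for
arbitrarily large `j`. -/
def gradedFamilyT {R : Type*} [CommRing R] (I : ℕ → Ideal R) (s : ℕ) :
    Set (PrimeSpectrum R) :=
  {p | ringKrullDim (R ⧸ p.asIdeal) = s ∧
    ∀ N : ℕ, ∃ j : ℕ, N ≤ j ∧
      Ideal.map (algebraMap R (Localization.AtPrime p.asIdeal)) (I j) ≠ ⊤}

theorem gradedFamilyT_finite
    {R : Type*} [CommRing R] [IsNoetherianRing R]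
    -- {I n} is a graded family of ideals
    (I : ℕ → Ideal R) (hI0 : I 0 = ⊤) (hIgr : ∀ i j, I i * I j ≤ I (i + j))
    -- s = limsup dim R/I_i is finite
    (s : ℕ)
    (hs : Filter.limsup (fun i : ℕ => ringKrullDim (R ⧸ I i)) Filter.atTop
      = (s : WithBot ℕ∞)) :
    (gradedFamilyT I s).Finite := by
  classical
  -- Step 1: eventually dim R/I_j ≤ s
  have hev : ∀ᶠ j in Filter.atTop, ringKrullDim (R ⧸ I j) ≤ (s : WithBot ℕ∞) := by
    by_contra h
    rw [Filter.not_eventually] at h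
    have hfreq : ∃ᶠ j in Filter.atTop,
        ((s + 1 : ℕ) : WithBot ℕ∞) ≤ ringKrullDim (R ⧸ I j) := by
      refine h.mono fun j hj => ?_
      have hlt : ((s : ℕ) : WithBot ℕ∞) < ringKrullDim (R ⧸ I j) := not_le.mp hj
      obtain ⟨t, ht, hst⟩ := WithBot.lt_iff_exists_coe.mp hlt
      have hst' : ((s : ℕ) : ℕ∞) < t := by exact_mod_cast hst
      have h1 : ((s : ℕ) : ℕ∞) + 1 ≤ t := Order.add_one_le_of_lt hst'
      rw [ht]
      exact_mod_cast h1
    have hle := Filter.le_limsup_of_frequently_le' hfreq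
    rw [hs] at hle
    have : (s + 1 : ℕ) ≤ s := by exact_mod_cast hle
    omega
  obtain ⟨N, hN⟩ := Filter.eventually_atTop.mp hev
  set N' : ℕ := max N 1 with hN'def
  have hN'1 : 1 ≤ N' := le_max_right _ _
  have hN'N : N ≤ N' := le_max_left _ _
  -- key : primes containing I_j for some j ≥ N' contain I_k with N' ≤ k < 2N'
  have key : ∀ j, N' ≤ j → ∀ (P : Ideal R), P.IsPrime → I j ≤ P →
      ∃ k, N' ≤ k ∧ k < 2 * N' ∧ I k ≤ P := by
    intro j
    induction j using Nat.strong_induction_on with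
    | _ j ih =>
      intro hj P hP hle
      by_cases h2 : j < 2 * N'
      · exact ⟨j, hj, h2, hle⟩
      · have h1 : N' + (j - N') = j := by omega
        have hmul : I N' * I (j - N') ≤ P := by
          have h2' := hIgr N' (j - N')
          rw [h1] at h2'
          exact le_trans h2' hle
        rcases hP.mul_le.mp hmul with h | h
        · exact ⟨N', le_refl _, by omega, h⟩
        · exact ih (j - N') (by omega) (by omega) P hP h
  -- for each k with N ≤ k the set of primes of dimension s containing I k is finite
  have hfin : ∀ k, N ≤ k →
      {p : PrimeSpectrum R | I k ≤ p.asIdeal ∧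
        ringKrullDim (R ⧸ p.asIdeal) = (s : WithBot ℕ∞)}.Finite := by
    intro k hk
    have hdimk : ringKrullDim (R ⧸ I k) ≤ (s : WithBot ℕ∞) := hN k hk
    have hsub : {p : PrimeSpectrum R | I k ≤ p.asIdeal ∧
        ringKrullDim (R ⧸ p.asIdeal) = (s : WithBot ℕ∞)} ⊆
        PrimeSpectrum.asIdeal ⁻¹' (I k).minimalPrimes := by
      rintro p ⟨hle, hdim⟩
      obtain ⟨q, hqmin, hqle⟩ := Ideal.exists_minimalPrimes_le hle
      have hqprime : q.IsPrime := hqmin.1.1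
      -- show q = p.asIdeal
      have hq_eq : q = p.asIdeal := by
        by_contra hne
        have hlt : (⟨q, hqprime⟩ : PrimeSpectrum R) < p := lt_of_le_of_ne hqle
          (fun h => hne (congrArg PrimeSpectrum.asIdeal h))
        -- coheight p ≤ s
        have hcp : (Order.coheight p : WithBot ℕ∞) ≤ (s : WithBot ℕ∞) :=
          le_trans (aux_coheight_le_ringKrullDim (I k) p hle) hdimk
        have hcp' : Order.coheight p ≤ (s : ℕ∞) := WithBot.coe_le_coe.mp hcp
        -- s ≤ coheight p
        have hsp : (s : WithBot ℕ∞) ≤ (Order.coheight p : WithBot ℕ∞) :=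
          hdim ▸ aux_ringKrullDim_le_coheight p
        have hsp' : (s : ℕ∞) ≤ Order.coheight p := WithBot.coe_le_coe.mp hsp
        -- coheight q ≤ s
        have hcq : (Order.coheight (⟨q, hqprime⟩ : PrimeSpectrum R) : WithBot ℕ∞)
            ≤ (s : WithBot ℕ∞) :=
          le_trans (aux_coheight_le_ringKrullDim (I k) ⟨q, hqprime⟩ hqmin.1.2) hdimk
        have hcq' : Order.coheight (⟨q, hqprime⟩ : PrimeSpectrum R) ≤ (s : ℕ∞) :=
          WithBot.coe_le_coe.mp hcq
        have hfinp : Order.coheight p < ⊤ :=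
          lt_of_le_of_lt hcp' (WithTop.coe_lt_top s)
        have : Order.coheight p < Order.coheight (⟨q, hqprime⟩ : PrimeSpectrum R) :=
          Order.coheight_strictAnti hlt hfinp
        exact absurd (lt_of_le_of_lt hsp' (lt_of_lt_of_le this hcq')) (lt_irrefl _)
      show p.asIdeal ∈ (I k).minimalPrimes
      rw [← hq_eq]
      exact hqmin
    refine Set.Finite.subset (Set.Finite.preimage ?_ ?_) hsub
    · exact Set.injOn_of_injective (fun a b => PrimeSpectrum.ext)
    · rw [Ideal.minimalPrimes_eq_comap]
      exact (minimalPrimes.finite_of_isNoetherianRing (R ⧸ I k)).image _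
  -- the inclusion
  have hsub : gradedFamilyT I s ⊆
      ⋃ k ∈ Finset.Ico N' (2 * N'), {p : PrimeSpectrum R | I k ≤ p.asIdeal ∧
        ringKrullDim (R ⧸ p.asIdeal) = (s : WithBot ℕ∞)} := by
    rintro p ⟨hdim, hfreq⟩
    obtain ⟨j, hj, hne⟩ := hfreq N'
    -- I j ≤ p.asIdeal
    have hle : I j ≤ p.asIdeal := by
      by_contra hnot
      obtain ⟨x, hxI, hxp⟩ := SetLike.not_le_iff_exists.mp hnot
      apply hne
      apply Ideal.eq_top_of_isUnit_mem _ (Ideal.mem_map_of_mem _ hxI)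
      exact IsLocalization.map_units (Localization.AtPrime p.asIdeal)
        (⟨x, hxp⟩ : p.asIdeal.primeCompl)
    obtain ⟨k, hk1, hk2, hkle⟩ := key j hj p.asIdeal p.isPrime hle
    exact Set.mem_biUnion (Finset.mem_Ico.mpr ⟨hk1, hk2⟩) ⟨hkle, hdim⟩
  refine Set.Finite.subset ?_ hsub
  refine Set.Finite.biUnion (Finset.Ico N' (2 * N')).finite_toSet ?_
  intro k hk
  exact hfin k (le_trans hN'N (Finset.mem_Ico.mp hk).1)
end

section
/- Suppose that R is a Noetherian ring and {I_i} is a graded family of ideals in R. Let s = limsup_i dim R/I_i (assumed finite), let i_0 be the smallest positive integer such that dim R/I_i ≤ s for all i ≥ i_0, and let T(I_*) = {p ∈ Spec(R) : dim R/p = s and (I_j)_p ≠ R_p for arbitrarily large j}. Then there exists c ∈ ℤ_+ such that for all j ≥ i_0 and all p ∈ T(I_*), p^{jc} R_p ⊆ I_j R_p. -/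
open Ideal



lemma exists_ltSeries_of_coe_le_krullDim {α : Type*} [Preorder α] {n : ℕ}
    (h : (n : WithBot ℕ∞) ≤ Order.krullDim α) : ∃ l : LTSeries α, l.length = n := by
  have hne : Nonempty α := by
    by_contra he
    rw [not_nonempty_iff] at he
    rw [Order.krullDim_eq_bot_iff.mpr he] at h
    simp at h
  obtain ⟨l, hl⟩ : ∃ l : LTSeries α, n ≤ l.length := by
    by_contra hc
    push_neg at hc
    have h1 : 1 ≤ n := by
      rcases Nat.eq_zero_or_pos n with rfl | h1
      · exact absurd (hc (RelSeries.singleton _ hne.some)) (by omega)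
      · omega
    have h2 : Order.krullDim α ≤ (((n - 1 : ℕ) : ℕ∞) : WithBot ℕ∞) := by
      rw [Order.krullDim_eq_iSup_length]
      rw [WithBot.coe_le_coe]
      refine iSup_le fun p => ?_
      exact_mod_cast Nat.le_sub_one_of_lt (hc p)
    have h3 : (n : WithBot ℕ∞) ≤ (((n - 1 : ℕ) : ℕ∞) : WithBot ℕ∞) := le_trans h h2
    have : n ≤ n - 1 := by exact_mod_cast h3
    omega
  exact ⟨l.take ⟨n, by omega⟩, by simp⟩


lemma prime_eq_of_dim {R : Type*} [CommRing R] (J p q : Ideal R) [p.IsPrime] (s : ℕ)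
    (hdimp : ringKrullDim (R ⧸ p) = (s : WithBot ℕ∞))
    (hdimJ : ringKrullDim (R ⧸ J) ≤ (s : WithBot ℕ∞))
    (hq : q.IsPrime) (hJq : J ≤ q) (hqp : q ≤ p) : q = p := by
  by_contra hne
  have hlt : q < p := lt_of_le_of_ne hqp hne
  have hJp : J ≤ p := hJq.trans hqp
  obtain ⟨l, hl⟩ := exists_ltSeries_of_coe_le_krullDim
    (α := PrimeSpectrum (R ⧸ p)) (n := s) (le_of_eq hdimp.symm)
  -- map into Spec (R ⧸ J)
  set F : R ⧸ J →+* R ⧸ p := Ideal.Quotient.factor hJp with hF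
  have hFsurj : Function.Surjective F := by
    have : Function.Surjective (F.comp (Ideal.Quotient.mk J)) := by
      rw [Ideal.Quotient.factor_comp_mk]
      exact Ideal.Quotient.mk_surjective
    rw [RingHom.coe_comp] at this; exact Function.Surjective.of_comp this
  set g : PrimeSpectrum (R ⧸ p) → PrimeSpectrum (R ⧸ J) := PrimeSpectrum.comap F with hg
  have hgmono : Monotone g := fun a b hab => by
    rw [← PrimeSpectrum.asIdeal_le_asIdeal] at hab ⊢
    exact Ideal.comap_mono hab
  have hginj : Function.Injective g := by
    intro a b hab
    have : Ideal.map F (Ideal.comap F a.asIdeal) = Ideal.map F (Ideal.comap F b.asIdeal) := by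
      have := congrArg PrimeSpectrum.asIdeal hab
      simp only [g, PrimeSpectrum.comap_asIdeal] at this
      rw [this]
    rw [Ideal.map_comap_of_surjective F hFsurj, Ideal.map_comap_of_surjective F hFsurj] at this
    exact PrimeSpectrum.ext this
  have hgsm : StrictMono g := hgmono.strictMono_of_injective hginj
  set l2 := l.map g hgsm with hl2
  -- the new head
  have hQ0prime : (q.map (Ideal.Quotient.mk J)).IsPrime :=
    Ideal.map_isPrime_of_surjective Ideal.Quotient.mk_surjective
      (by rw [Ideal.mk_ker]; exact hJq)
  set Q0 : PrimeSpectrum (R ⧸ J) := ⟨q.map (Ideal.Quotient.mk J), hQ0prime⟩ with hQ0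
  have hcomapQ0 : Ideal.comap (Ideal.Quotient.mk J) Q0.asIdeal = q := by
    rw [hQ0, Ideal.comap_map_of_surjective _ Ideal.Quotient.mk_surjective]
    simp only [← RingHom.ker_eq_comap_bot, Ideal.mk_ker]
    exact sup_eq_left.mpr hJq
  have hcomaphead : p ≤ Ideal.comap (Ideal.Quotient.mk J) l2.head.asIdeal := by
    rw [hl2, LTSeries.head_map]
    have : (g l.head).asIdeal = Ideal.comap F l.head.asIdeal := rfl
    rw [this, Ideal.comap_comap, Ideal.Quotient.factor_comp_mk]
    intro x hx
    rw [Ideal.mem_comap]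
    have : (Ideal.Quotient.mk p) x = 0 := Ideal.Quotient.eq_zero_iff_mem.mpr hx
    rw [this]
    exact (l.head.asIdeal).zero_mem
  have hQ0lt : Q0 < l2.head := by
    rw [← PrimeSpectrum.asIdeal_lt_asIdeal]
    constructor
    · have : Q0.asIdeal = Ideal.map (Ideal.Quotient.mk J)
          (Ideal.comap (Ideal.Quotient.mk J) Q0.asIdeal) :=
        (Ideal.map_comap_of_surjective _ Ideal.Quotient.mk_surjective _).symm
      rw [this, ← Ideal.map_comap_of_surjective (Ideal.Quotient.mk J)
        Ideal.Quotient.mk_surjective l2.head.asIdeal]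
      exact Ideal.map_mono (by rw [hcomapQ0]; exact hqp.trans hcomaphead)
    · intro hle
      have : Ideal.comap (Ideal.Quotient.mk J) l2.head.asIdeal
          ≤ Ideal.comap (Ideal.Quotient.mk J) Q0.asIdeal := Ideal.comap_mono hle
      rw [hcomapQ0] at this
      exact absurd (hcomaphead.trans this) hlt.not_ge
  set l3 := l2.cons Q0 hQ0lt with hl3
  have hlen : l3.length = s + 1 := by
    rw [hl3]
    simp [hl2, hl]
  have := Order.LTSeries.length_le_krullDim l3
  rw [hlen] at this
  have hfinal : ((s + 1 : ℕ) : WithBot ℕ∞) ≤ (s : WithBot ℕ∞) := by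
    calc ((s + 1 : ℕ) : WithBot ℕ∞) ≤ Order.krullDim (PrimeSpectrum (R ⧸ J)) := by
          exact_mod_cast this
      _ ≤ (s : WithBot ℕ∞) := hdimJ
  have : s + 1 ≤ s := by exact_mod_cast hfinal
  omega


lemma radical_map_le_map_radical {R S : Type*} [CommRing R] [CommRing S] [Algebra R S]
    (M : Submonoid R) [IsLocalization M S] (I : Ideal R) :
    (I.map (algebraMap R S)).radical ≤ (I.radical).map (algebraMap R S) := by
  intro y hy
  obtain ⟨n₀, hn₀⟩ := hy
  set n := n₀ + 1 with hn
  have hyn : y ^ n ∈ I.map (algebraMap R S) := by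
    rw [hn, pow_succ]
    exact Ideal.mul_mem_right _ _ hn₀
  obtain ⟨⟨⟨a, haI⟩, m'⟩, hx⟩ := (IsLocalization.mem_map_algebraMap_iff M S).mp hyn
  obtain ⟨⟨r, m⟩, hy'⟩ := IsLocalization.surj M y
  simp only at hx hy'
  have key : algebraMap R S (r ^ n * (m' : R)) = algebraMap R S (a * (m : R) ^ n) := by
    rw [_root_.map_mul, _root_.map_mul, map_pow, map_pow, ← hy']
    calc (y * algebraMap R S (m : R)) ^ n * algebraMap R S (m' : R)
        = (y ^ n * algebraMap R S (m' : R)) * (algebraMap R S (m : R)) ^ n := by ring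
      _ = algebraMap R S a * (algebraMap R S (m : R)) ^ n := by rw [hx]
  obtain ⟨c, hc⟩ := (IsLocalization.eq_iff_exists M S).mp key
  have hrad : (c : R) * r * (m' : R) ∈ I.radical := by
    refine ⟨n, ?_⟩
    have heq : ((c : R) * r * (m' : R)) ^ n
        = ((c : R) * (a * (m : R) ^ n)) * ((c : R) ^ (n - 1) * (m' : R) ^ (n - 1)) := by
      rw [← hc]
      have h1 : n = (n - 1) + 1 := by omega
      calc ((c:R) * r * (m':R)) ^ n = (c:R) ^ n * r ^ n * (m':R) ^ n := by ring
        _ = ((c:R) * (r ^ n * (m':R))) * ((c:R) ^ (n-1) * (m':R) ^ (n-1)) := by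
            nth_rewrite 1 [h1]; nth_rewrite 3 [h1]; ring
    rw [heq]
    exact Ideal.mul_mem_right _ _
      (Ideal.mul_mem_left _ _ (Ideal.mul_mem_right _ _ haI))
  refine (IsLocalization.mem_map_algebraMap_iff M S).mpr
    ⟨⟨⟨(c : R) * r * (m' : R), hrad⟩, c * m' * m⟩, ?_⟩
  simp only [Submonoid.coe_mul]
  rw [_root_.map_mul, _root_.map_mul, _root_.map_mul, _root_.map_mul]
  rw [show y * (algebraMap R S (c:R) * algebraMap R S (m':R) * algebraMap R S (m:R))
      = algebraMap R S (c:R) * algebraMap R S (m':R) * (y * algebraMap R S (m:R)) by ring, hy']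
  ring

lemma loc_bound {R : Type*} [CommRing R] (J p : Ideal R) [p.IsPrime] (s : ℕ)
    (hdimp : ringKrullDim (R ⧸ p) = (s : WithBot ℕ∞))
    (hdimJ : ringKrullDim (R ⧸ J) ≤ (s : WithBot ℕ∞))
    {n : ℕ} (hn : J.radical ^ n ≤ J) :
    (Ideal.map (algebraMap R (Localization.AtPrime p)) p) ^ n
      ≤ Ideal.map (algebraMap R (Localization.AtPrime p)) J := by
  set f := algebraMap R (Localization.AtPrime p) with hf
  by_cases hJp : J ≤ p
  · have h1 : Ideal.map f p ≤ (Ideal.map f J).radical := by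
      rw [Ideal.radical_eq_sInf]
      refine le_sInf ?_
      rintro Q ⟨hJQ, hQ⟩
      have hQle : Q ≤ IsLocalRing.maximalIdeal (Localization.AtPrime p) :=
        IsLocalRing.le_maximalIdeal hQ.ne_top
      have hcomap : Ideal.comap f Q ≤ p := by
        calc Ideal.comap f Q ≤ Ideal.comap f (IsLocalRing.maximalIdeal _) :=
              Ideal.comap_mono hQle
          _ = p := Localization.AtPrime.comap_maximalIdeal
      have hprime : (Ideal.comap f Q).IsPrime := hQ.comap f
      have hJle : J ≤ Ideal.comap f Q := le_trans Ideal.le_comap_map (Ideal.comap_mono hJQ)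
      have heq := prime_eq_of_dim J p (Ideal.comap f Q) s hdimp hdimJ hprime hJle hcomap
      refine le_of_eq ?_
      calc Ideal.map f p = Ideal.map f (Ideal.comap f Q) := by rw [heq]
        _ = Q := IsLocalization.map_comap p.primeCompl _ Q
    calc (Ideal.map f p) ^ n ≤ ((Ideal.map f J).radical) ^ n := Ideal.pow_right_mono h1 n
      _ ≤ (Ideal.map f J.radical) ^ n :=
          Ideal.pow_right_mono (radical_map_le_map_radical p.primeCompl J) n
      _ = Ideal.map f (J.radical ^ n) := (Ideal.map_pow f _ n).symm
      _ ≤ Ideal.map f J := Ideal.map_mono hn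
  · obtain ⟨x, hxJ, hxp⟩ := SetLike.not_le_iff_exists.mp hJp
    have htop : Ideal.map f J = ⊤ :=
      Ideal.eq_top_of_isUnit_mem _ (Ideal.mem_map_of_mem f hxJ)
        (IsLocalization.map_units (Localization.AtPrime p) (⟨x, hxp⟩ : p.primeCompl))
    rw [htop]
    exact le_top

lemma graded_pow_mul_le {R : Type*} [CommRing R] (I : ℕ → Ideal R)
    (hIgr : ∀ i j, I i * I j ≤ I (i + j)) (a b : ℕ) :
    ∀ t : ℕ, I a ^ t * I b ≤ I (t * a + b) := by
  intro t
  induction t with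
  | zero => simp
  | succ t ih =>
    calc I a ^ (t + 1) * I b = I a * (I a ^ t * I b) := by ring
      _ ≤ I a * I (t * a + b) := Ideal.mul_mono_right ih
      _ ≤ I (a + (t * a + b)) := hIgr a _
      _ = I ((t + 1) * a + b) := congrArg I (by ring)
theorem uniform_power_containment_on_T
    {R : Type*} [CommRing R] [IsNoetherianRing R]
    -- {I n} is a graded family of ideals
    (I : ℕ → Ideal R) (hI0 : I 0 = ⊤) (hIgr : ∀ i j, I i * I j ≤ I (i + j))
    -- s = limsup dim R/I_i is finite
    (s : ℕ)
    (hs : Filter.limsup (fun i : ℕ => ringKrullDim (R ⧸ I i)) Filter.atTop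
      = (s : WithBot ℕ∞))
    -- i₀ is the smallest positive integer such that dim R/I_i ≤ s for all i ≥ i₀
    (i₀ : ℕ) (hi₀pos : 0 < i₀)
    (hi₀ : ∀ i : ℕ, i₀ ≤ i → ringKrullDim (R ⧸ I i) ≤ (s : WithBot ℕ∞))
    (hi₀min : ∀ i' : ℕ, 0 < i' →
      (∀ i : ℕ, i' ≤ i → ringKrullDim (R ⧸ I i) ≤ (s : WithBot ℕ∞)) → i₀ ≤ i') :
    ∃ c : ℕ, 0 < c ∧ ∀ j : ℕ, i₀ ≤ j → ∀ p ∈ gradedFamilyT I s,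
      Ideal.map (algebraMap R (Localization.AtPrime p.asIdeal)) (p.asIdeal ^ (j * c))
        ≤ Ideal.map (algebraMap R (Localization.AtPrime p.asIdeal)) (I j) := by
  classical
  have hfg : ∀ k : ℕ, ∃ n : ℕ, (I k).radical ^ n ≤ I k := fun k =>
    Ideal.exists_radical_pow_le_of_fg _ (IsNoetherian.noetherian _)
  choose N hN using hfg
  set c := (Finset.Ico i₀ (2 * i₀)).sup N + 1 with hc
  refine ⟨c, Nat.succ_pos _, ?_⟩
  intro j hj p hp
  haveI := p.isPrime
  obtain ⟨hdimp, -⟩ := hp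
  set f := algebraMap R (Localization.AtPrime p.asIdeal) with hf
  set M := Ideal.map f p.asIdeal with hM
  have hwin : ∀ k : ℕ, i₀ ≤ k → k < 2 * i₀ → M ^ c ≤ Ideal.map f (I k) := by
    intro k hk1 hk2
    have hNk : N k ≤ c :=
      le_trans (Finset.le_sup (Finset.mem_Ico.mpr ⟨hk1, hk2⟩)) (Nat.le_succ _)
    calc M ^ c ≤ M ^ (N k) := Ideal.pow_le_pow_right hNk
      _ ≤ Ideal.map f (I k) := loc_bound (I k) p.asIdeal s hdimp (hi₀ k hk1) (hN k)
  obtain ⟨t, ht⟩ : ∃ t, j / i₀ = t + 1 := by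
    have h1 : 1 ≤ j / i₀ := (Nat.one_le_div_iff hi₀pos).mpr hj
    exact ⟨j / i₀ - 1, by omega⟩
  set r := j % i₀ + i₀ with hr
  have hrange1 : i₀ ≤ r := by omega
  have hrange2 : r < 2 * i₀ := by
    have := Nat.mod_lt j hi₀pos
    omega
  have hdecomp : t * i₀ + r = j := by
    have h1 := Nat.div_add_mod j i₀
    rw [ht, Nat.mul_add, Nat.mul_one] at h1
    have h2 : i₀ * t = t * i₀ := Nat.mul_comm _ _
    omega
  have hchain : I i₀ ^ t * I r ≤ I j := by
    rw [← hdecomp]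
    exact graded_pow_mul_le I hIgr i₀ r t
  have hmapchain : (Ideal.map f (I i₀)) ^ t * Ideal.map f (I r) ≤ Ideal.map f (I j) := by
    rw [← Ideal.map_pow, ← Ideal.map_mul]
    exact Ideal.map_mono hchain
  have hbig : M ^ (c * t + c) ≤ Ideal.map f (I j) := by
    rw [pow_add, pow_mul]
    refine le_trans (Ideal.mul_mono ?_ (hwin r hrange1 hrange2)) hmapchain
    exact Ideal.pow_right_mono (hwin i₀ le_rfl (by omega)) t
  have htj : t + 1 ≤ j := le_trans (ht ▸ Nat.div_le_self j i₀) le_rfl |>.trans le_rfl |> fun _ => le_trans (by omega : t + 1 ≤ j / i₀ + 0) (by simpa using Nat.div_le_self j i₀)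
  have hexp : c * t + c ≤ j * c := by
    calc c * t + c = c * (t + 1) := by ring
      _ ≤ c * j := Nat.mul_le_mul_left c htj
      _ = j * c := Nat.mul_comm _ _
  calc Ideal.map f (p.asIdeal ^ (j * c)) = M ^ (j * c) := Ideal.map_pow f _ _
    _ ≤ M ^ (c * t + c) := Ideal.pow_le_pow_right hexp
    _ ≤ Ideal.map f (I j) := hbig
end

section
/- Suppose that R is a Noetherian ring and {I_i} is a graded family of ideals in R. Let s = limsup_i dim R/I_i (assumed finite), let i_0 be the smallest positive integer such that dim R/I_i ≤ s for all i ≥ i_0, let T(I_*) = {p ∈ Spec(R) : dim R/p = s and (I_j)_p ≠ R_p for arbitrarily large j}, and let A(I_*) = {q ∈ T(I_*) : I_n R_q is q_q-primary for all n ≥ i_0}. If q ∈ T(I_*) \ A(I_*), then there exists b ∈ ℤ_+ such that q_q^b ⊆ (I_n)_q for all n ≥ i_0. -/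
/-- The subset `A(I_*) ⊆ T(I_*)` of primes `q` such that `I_n R_q` is `q_q`-primary for all
`n ≥ i₀`. -/
def gradedFamilyA {R : Type*} [CommRing R] (I : ℕ → Ideal R) (s : ℕ) (i₀ : ℕ) :
    Set (PrimeSpectrum R) :=
  {q | q ∈ gradedFamilyT I s ∧ ∀ n : ℕ, i₀ ≤ n →
    (Ideal.map (algebraMap R (Localization.AtPrime q.asIdeal)) (I n)).IsPrimary ∧
    (Ideal.map (algebraMap R (Localization.AtPrime q.asIdeal)) (I n)).radical
      = IsLocalRing.maximalIdeal (Localization.AtPrime q.asIdeal)}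

/-- If `p < q` are primes, the dimension of `R/p` is strictly larger than that of `R/q`
(when the latter is a finite natural number `s`). -/
lemma dim_quot_not_le_of_lt {R : Type*} [CommRing R] {p q : Ideal R}
    [p.IsPrime] [q.IsPrime] (hpq : p < q) {s : ℕ}
    (hq : ringKrullDim (R ⧸ q) = (s : WithBot ℕ∞)) :
    ¬ ringKrullDim (R ⧸ p) ≤ (s : WithBot ℕ∞) := by
  intro hle
  have hsurj : Function.Surjective (Ideal.Quotient.factor hpq.le) := by
    intro y
    obtain ⟨x, rfl⟩ := Ideal.Quotient.mk_surjective y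
    exact ⟨Ideal.Quotient.mk p x, Ideal.Quotient.factor_mk hpq.le x⟩
  obtain ⟨x, hxq, hxp⟩ := SetLike.exists_of_lt hpq
  -- the map sending `⊥` to the zero ideal of `R/p` and a prime of `R/q` to its pullback
  set g : WithBot (PrimeSpectrum (R ⧸ q)) → PrimeSpectrum (R ⧸ p) :=
    fun z => WithBot.recBotCoe ⟨⊥, Ideal.bot_prime⟩
      (fun r => PrimeSpectrum.comap (Ideal.Quotient.factor hpq.le) r) z with hg
  have hbotlt : ∀ r : PrimeSpectrum (R ⧸ q),
      (⊥ : Ideal (R ⧸ p)) < (PrimeSpectrum.comap (Ideal.Quotient.factor hpq.le) r).asIdeal := by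
    intro r
    refine lt_of_le_of_ne bot_le ?_
    intro h
    have hmem : Ideal.Quotient.mk p x ∈
        (PrimeSpectrum.comap (Ideal.Quotient.factor hpq.le) r).asIdeal := by
      show Ideal.Quotient.factor hpq.le (Ideal.Quotient.mk p x) ∈ r.asIdeal
      rw [Ideal.Quotient.factor_mk]
      simpa using (Ideal.Quotient.eq_zero_iff_mem.mpr hxq) ▸ r.asIdeal.zero_mem
    rw [← h, Ideal.mem_bot, Ideal.Quotient.eq_zero_iff_mem] at hmem
    exact hxp hmem
  have hgmono : StrictMono g := by
    intro a b hab
    induction a using WithBot.recBotCoe with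
    | bot =>
      induction b using WithBot.recBotCoe with
      | bot => exact absurd hab (lt_irrefl _)
      | coe r =>
        exact (PrimeSpectrum.asIdeal_lt_asIdeal _ _).mp (hbotlt r)
    | coe r1 =>
      induction b using WithBot.recBotCoe with
      | bot => exact absurd hab (by simp)
      | coe r2 =>
        have h12 : r1 < r2 := WithBot.coe_lt_coe.mp hab
        refine (PrimeSpectrum.asIdeal_lt_asIdeal _ _).mp ?_
        refine lt_of_le_of_ne (Ideal.comap_mono h12.le) ?_
        intro h
        have := Ideal.comap_injective_of_surjective _ hsurj h
        exact h12.ne (PrimeSpectrum.ext this)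
  have hnon : Nonempty (PrimeSpectrum (R ⧸ q)) := inferInstance
  have hdim : Order.krullDim (WithBot (PrimeSpectrum (R ⧸ q)))
      ≤ Order.krullDim (PrimeSpectrum (R ⧸ p)) :=
    Order.krullDim_le_of_strictMono g hgmono
  rw [Order.krullDim_withBot] at hdim
  have : ringKrullDim (R ⧸ q) + 1 ≤ ringKrullDim (R ⧸ p) := hdim
  rw [hq] at this
  have h2 : (s : WithBot ℕ∞) + 1 ≤ (s : WithBot ℕ∞) := this.trans hle
  have h3 : ((s + 1 : ℕ) : WithBot ℕ∞) ≤ ((s : ℕ) : WithBot ℕ∞) := by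
    push_cast
    exact h2
  exact absurd (Nat.cast_le.mp h3) (by omega)

theorem bounded_power_outside_A
    {R : Type*} [CommRing R] [IsNoetherianRing R]
    -- {I n} is a graded family of ideals
    (I : ℕ → Ideal R) (hI0 : I 0 = ⊤) (hIgr : ∀ i j, I i * I j ≤ I (i + j))
    -- s = limsup dim R/I_i is finite
    (s : ℕ)
    (hs : Filter.limsup (fun i : ℕ => ringKrullDim (R ⧸ I i)) Filter.atTop
      = (s : WithBot ℕ∞))
    -- i₀ is the smallest positive integer such that dim R/I_i ≤ s for all i ≥ i₀
    (i₀ : ℕ) (hi₀pos : 0 < i₀)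
    (hi₀ : ∀ i : ℕ, i₀ ≤ i → ringKrullDim (R ⧸ I i) ≤ (s : WithBot ℕ∞))
    (hi₀min : ∀ i' : ℕ, 0 < i' →
      (∀ i : ℕ, i' ≤ i → ringKrullDim (R ⧸ I i) ≤ (s : WithBot ℕ∞)) → i₀ ≤ i')
    (q : PrimeSpectrum R) (hqT : q ∈ gradedFamilyT I s) (hqA : q ∉ gradedFamilyA I s i₀) :
    ∃ b : ℕ, 0 < b ∧ ∀ n : ℕ, i₀ ≤ n →
      IsLocalRing.maximalIdeal (Localization.AtPrime q.asIdeal) ^ b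
        ≤ Ideal.map (algebraMap R (Localization.AtPrime q.asIdeal)) (I n) := by
  classical
  set L := Localization.AtPrime q.asIdeal with hL
  set f := algebraMap R L with hf
  have hNoeth : IsNoetherianRing L :=
    IsLocalization.isNoetherianRing q.asIdeal.primeCompl L ‹_›
  -- key: if `(I n)_q` is proper for `n ≥ i₀`, its radical is the maximal ideal
  have hrad : ∀ n : ℕ, i₀ ≤ n → Ideal.map f (I n) ≠ ⊤ →
      (Ideal.map f (I n)).radical = IsLocalRing.maximalIdeal L := by
    intro n hn hne
    apply le_antisymm
    · have h1 : Ideal.map f (I n) ≤ IsLocalRing.maximalIdeal L :=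
        IsLocalRing.le_maximalIdeal hne
      have := Ideal.radical_mono h1
      rwa [(IsLocalRing.maximalIdeal.isMaximal L).isPrime.radical] at this
    · rw [Ideal.radical_eq_sInf]
      refine le_sInf ?_
      rintro J ⟨hJle, hJprime⟩
      have hJne : J ≠ ⊤ := hJprime.ne_top
      have hJmax : J ≤ IsLocalRing.maximalIdeal L := IsLocalRing.le_maximalIdeal hJne
      have hcomap_prime : (Ideal.comap f J).IsPrime := Ideal.IsPrime.comap f
      have hcomap_le : Ideal.comap f J ≤ q.asIdeal := by
        have := Ideal.comap_mono (f := f) hJmax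
        exact this.trans (IsLocalization.AtPrime.comap_maximalIdeal L q.asIdeal).le
      have hIle : I n ≤ Ideal.comap f J :=
        le_trans Ideal.le_comap_map (Ideal.comap_mono hJle)
      have heq : Ideal.comap f J = q.asIdeal := by
        by_contra hne'
        have hlt : Ideal.comap f J < q.asIdeal := lt_of_le_of_ne hcomap_le hne'
        have hdim : ringKrullDim (R ⧸ Ideal.comap f J) ≤ (s : WithBot ℕ∞) := by
          refine le_trans ?_ (hi₀ n hn)
          exact ringKrullDim_le_of_surjective (Ideal.Quotient.factor hIle)
            (fun y => by
              obtain ⟨x, rfl⟩ := Ideal.Quotient.mk_surjective y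
              exact ⟨Ideal.Quotient.mk _ x, Ideal.Quotient.factor_mk hIle x⟩)
        exact dim_quot_not_le_of_lt hlt hqT.1 hdim
      have : Ideal.map f (Ideal.comap f J) = J :=
        IsLocalization.map_comap q.asIdeal.primeCompl L J
      rw [← this, heq, Localization.AtPrime.map_eq_maximalIdeal]
  -- get `n₁ ≥ i₀` where primariness fails; necessarily `(I n₁)_q = ⊤`
  have hqA' : ∃ n : ℕ, i₀ ≤ n ∧ ¬((Ideal.map f (I n)).IsPrimary ∧
      (Ideal.map f (I n)).radical = IsLocalRing.maximalIdeal L) := by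
    by_contra h
    push_neg at h
    exact hqA ⟨hqT, fun n hn => h n hn⟩
  obtain ⟨n₁, hn₁, hbad⟩ := hqA'
  have hn₁pos : 0 < n₁ := lt_of_lt_of_le hi₀pos hn₁
  have htop : Ideal.map f (I n₁) = ⊤ := by
    by_contra hne
    have hr := hrad n₁ hn₁ hne
    refine hbad ⟨?_, hr⟩
    exact Ideal.isPrimary_of_isMaximal_radical (hr ▸ IsLocalRing.maximalIdeal.isMaximal L)
  -- monotonicity step
  have hstep : ∀ n : ℕ, Ideal.map f (I n) ≤ Ideal.map f (I (n + n₁)) := by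
    intro n
    calc Ideal.map f (I n) = Ideal.map f (I n) * Ideal.map f (I n₁) := by
          rw [htop, Ideal.mul_top]
      _ = Ideal.map f (I n * I n₁) := (Ideal.map_mul f _ _).symm
      _ ≤ Ideal.map f (I (n + n₁)) := Ideal.map_mono (hIgr n n₁)
  have hiter : ∀ k r : ℕ, Ideal.map f (I (i₀ + r)) ≤ Ideal.map f (I (i₀ + r + k * n₁)) := by
    intro k r
    induction k with
    | zero => simp
    | succ k ih =>
      have : i₀ + r + (k + 1) * n₁ = (i₀ + r + k * n₁) + n₁ := by ring
      rw [this]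
      exact le_trans ih (hstep _)
  -- per-n bounds
  have hB : ∀ n : ℕ, ∃ k : ℕ, i₀ ≤ n →
      IsLocalRing.maximalIdeal L ^ k ≤ Ideal.map f (I n) := by
    intro n
    by_cases hn : i₀ ≤ n
    · by_cases hne : Ideal.map f (I n) = ⊤
      · exact ⟨1, fun _ => by rw [hne]; exact le_top⟩
      · obtain ⟨k, hk⟩ := Ideal.exists_radical_pow_le_of_fg (Ideal.map f (I n))
          (IsNoetherian.noetherian _)
        rw [hrad n hn hne] at hk
        exact ⟨k, fun _ => hk⟩
    · exact ⟨1, fun h => absurd h hn⟩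
  choose B hBspec using hB
  refine ⟨(Finset.range n₁).sup (fun r => B (i₀ + r)) + 1, Nat.succ_pos _, ?_⟩
  intro n hn
  set r := (n - i₀) % n₁ with hr
  set k := (n - i₀) / n₁ with hk
  have hrlt : r < n₁ := Nat.mod_lt _ hn₁pos
  have hneq : n = i₀ + r + k * n₁ := by
    have h1 : n₁ * k + r = n - i₀ := Nat.div_add_mod _ _
    rw [Nat.mul_comm k n₁]
    omega
  have hble : B (i₀ + r) ≤ (Finset.range n₁).sup (fun r => B (i₀ + r)) + 1 :=
    le_trans (Finset.le_sup (f := fun r => B (i₀ + r)) (Finset.mem_range.mpr hrlt)) (Nat.le_succ _)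
  calc IsLocalRing.maximalIdeal L ^ ((Finset.range n₁).sup (fun r => B (i₀ + r)) + 1)
      ≤ IsLocalRing.maximalIdeal L ^ (B (i₀ + r)) := Ideal.pow_le_pow_right hble
    _ ≤ Ideal.map f (I (i₀ + r)) := hBspec (i₀ + r) (Nat.le_add_right _ _)
    _ ≤ Ideal.map f (I (i₀ + r + k * n₁)) := hiter k r
    _ = Ideal.map f (I n) := by rw [← hneq]
end
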